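/- arXiv:1503.05993 — 14 statements merged into one kernel-verified Lean document; each statement's English description precedes it below -/
import Mathlib

section
/- If {n_0,...,n_p} is a compound sequence, then gcd(n_0, n_1, ..., n_i) = a_{i+1}·a_{i+2}⋯a_p for all i in [0,p]. -/
theorem stmt2 (p : ℕ) (hp : 1 ≤ p) (a b : ℕ → ℕ)
    (ha : ∀ i, 1 ≤ i → i ≤ p → 2 ≤ a i ∧ a i < b i)
    (hab : ∀ i j, 1 ≤ j → j ≤ i → i ≤ p → Nat.gcd (a i) (b j) = 1)
    (n : ℕ → ℕ)
    (hn : ∀ i, i ≤ p → n i = (∏ j ∈ Finset.Icc 1 i, b j) * ∏ j ∈ Finset.Icc (i+1) p, a j)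
    (i : ℕ) (hip : i ≤ p) :
    (Finset.range (i + 1)).gcd n = ∏ j ∈ Finset.Icc (i+1) p, a j := by
  induction i with
  | zero =>
    have h0 := hn 0 (by omega)
    simp [Finset.range_one, h0]
  | succ k ih =>
    have hk : k ≤ p := by omega
    have hrange : Finset.range (k + 1 + 1) = insert (k+1) (Finset.range (k+1)) := by
      rw [Finset.range_add_one]
    rw [hrange, Finset.gcd_insert, ih hk]
    have hcop : Nat.Coprime (a (k+1)) (∏ j ∈ Finset.Icc 1 (k+1), b j) :=
      Nat.Coprime.prod_right fun j hj => by
        simp only [Finset.mem_Icc] at hj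
        exact hab (k+1) j hj.1 hj.2 hip
    have hsplit : ∏ j ∈ Finset.Icc (k+1) p, a j
        = a (k+1) * ∏ j ∈ Finset.Icc (k+2) p, a j := by
      have : Finset.Icc (k+1) p = insert (k+1) (Finset.Icc (k+2) p) := by
        ext x; simp [Finset.mem_Icc]; omega
      rw [this, Finset.prod_insert (by simp)]
    rw [hn (k+1) hip, hsplit]
    have : gcd ((∏ j ∈ Finset.Icc 1 (k+1), b j) * ∏ j ∈ Finset.Icc (k+1+1) p, a j)
        (a (k+1) * ∏ j ∈ Finset.Icc (k+2) p, a j)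
        = Nat.gcd ((∏ j ∈ Finset.Icc 1 (k+1), b j) * ∏ j ∈ Finset.Icc (k+2) p, a j)
          (a (k+1) * ∏ j ∈ Finset.Icc (k+2) p, a j) := rfl
    rw [this, Nat.gcd_mul_right, Nat.gcd_comm, hcop, one_mul]
end

section
/- If {n_0,...,n_p} is a compound sequence, then gcd(n_i, n_{i+1}, ..., n_p) = b_1·b_2⋯b_i for all i in [0,p]. -/
theorem stmt3 (p : ℕ) (hp : 1 ≤ p) (a b : ℕ → ℕ)
    (ha : ∀ i, 1 ≤ i → i ≤ p → 2 ≤ a i ∧ a i < b i)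
    (hab : ∀ i j, 1 ≤ j → j ≤ i → i ≤ p → Nat.gcd (a i) (b j) = 1)
    (n : ℕ → ℕ)
    (hn : ∀ i, i ≤ p → n i = (∏ j ∈ Finset.Icc 1 i, b j) * ∏ j ∈ Finset.Icc (i+1) p, a j)
    (i : ℕ) (hip : i ≤ p) :
    (Finset.Icc i p).gcd n = ∏ j ∈ Finset.Icc 1 i, b j := by
  induction' h : p - i with m ih generalizing i
  · have : i = p := by omega
    subst this
    rw [Finset.Icc_self, Finset.gcd_singleton, hn _ le_rfl]
    simp
  · have hi1 : i + 1 ≤ p := by omega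
    have hins : Finset.Icc i p = insert i (Finset.Icc (i+1) p) := by
      rw [Finset.Icc_add_one_left_eq_Ioc, Finset.Ioc_insert_left hip]
    rw [hins, Finset.gcd_insert, ih (i+1) hi1 (by omega), hn i hip,
      Finset.prod_Icc_succ_top (by omega : 1 ≤ i + 1)]
    have hcop : Nat.Coprime (∏ j ∈ Finset.Icc (i+1) p, a j) (b (i+1)) :=
      Nat.Coprime.prod_left fun j hj => by
        simp only [Finset.mem_Icc] at hj
        exact hab j (i+1) (by omega) hj.1 hj.2
    rw [mul_comm (∏ j ∈ Finset.Icc 1 i, b j) (b (i+1))]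
    rw [show b (i+1) * ∏ j ∈ Finset.Icc 1 i, b j = (∏ j ∈ Finset.Icc 1 i, b j) * b (i+1) from mul_comm _ _]
    show Nat.gcd _ _ = _
    rw [Nat.gcd_mul_left, hcop.gcd_eq_one, mul_one]
end

section
/- If {n_0,...,n_p} is a compound sequence, then for each i in [1,p], n_i is not contained in the additive submonoid of ℕ generated by n_0, ..., n_{i-1}; consequently {n_0,...,n_p} is a minimal generating set of the numerical semigroup it generates. -/
/-!
Since `n_{i+1} * a_{i+1} = n_i * b_{i+1}` and `a_{i+1} < b_{i+1}`, the sequence `n` is strictly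
increasing, so a representation of `n_i` by the other generators can only involve
`n_0, …, n_{i-1}`. These are all divisible by `a_i a_{i+1} ⋯ a_p`, whereas
`n_i = b_1 ⋯ b_i · a_{i+1} ⋯ a_p` is not, because `a_i > 1` is coprime to `b_1 ⋯ b_i`.
-/

open Finset

def compoundTerm (a b : ℕ → ℕ) (p i : ℕ) : ℕ :=
  (∏ j ∈ Icc 1 i, b j) * ∏ j ∈ Icc (i + 1) p, a j

section CompoundTerm

variable {a b : ℕ → ℕ} {p : ℕ}

lemma compoundTerm_pos (ha : ∀ k, 1 ≤ k → k ≤ p → 0 < a k) (hb : ∀ k, 1 ≤ k → k ≤ p → 0 < b k)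
    {i : ℕ} (hi : i ≤ p) : 0 < compoundTerm a b p i := by
  refine Nat.mul_pos (prod_pos fun k hk => ?_) (prod_pos fun k hk => ?_) <;>
    simp only [mem_Icc] at hk
  · exact hb k hk.1 (hk.2.trans hi)
  · exact ha k (by omega) hk.2

lemma prod_Icc_eq_mul_prod_Icc_succ (f : ℕ → ℕ) {i : ℕ} (hi : i ≤ p) :
    ∏ k ∈ Icc i p, f k = f i * ∏ k ∈ Icc (i + 1) p, f k := by
  rw [Icc_add_one_left_eq_Ioc, mul_prod_Ioc_eq_prod_Icc hi]

lemma compoundTerm_succ_mul {i : ℕ} (hi : i < p) :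
    compoundTerm a b p (i + 1) * a (i + 1) = compoundTerm a b p i * b (i + 1) := by
  rw [compoundTerm, compoundTerm, prod_Icc_succ_top (by omega),
    prod_Icc_eq_mul_prod_Icc_succ a (show i + 1 ≤ p by omega)]
  ring

lemma strictMonoOn_compoundTerm (ha : ∀ k, 1 ≤ k → k ≤ p → 0 < a k)
    (hab : ∀ k, 1 ≤ k → k ≤ p → a k < b k) :
    StrictMonoOn (compoundTerm a b p) (Set.Iic p) := by
  have hb : ∀ k, 1 ≤ k → k ≤ p → 0 < b k := fun k h1 h2 => (ha k h1 h2).trans (hab k h1 h2)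
  refine strictMonoOn_Iic_of_lt_succ fun i hi => ?_
  rw [Order.succ_eq_add_one]
  refine lt_of_mul_lt_mul_right (a := a (i + 1)) ?_ (Nat.zero_le _)
  calc compoundTerm a b p i * a (i + 1) < compoundTerm a b p i * b (i + 1) :=
        Nat.mul_lt_mul_of_pos_left (hab (i + 1) (by omega) hi) (compoundTerm_pos ha hb hi.le)
    _ = compoundTerm a b p (i + 1) * a (i + 1) := (compoundTerm_succ_mul hi).symm

lemma prod_Icc_dvd_compoundTerm {i j : ℕ} (hji : j < i) :
    ∏ k ∈ Icc i p, a k ∣ compoundTerm a b p j :=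
  Dvd.dvd.mul_left (prod_dvd_prod_of_subset _ _ a (Icc_subset_Icc (by omega) le_rfl)) _

lemma sum_range_ne_compoundTerm {i : ℕ} (hip : i ≤ p) (hai : a i ≠ 1)
    (hcop : ∀ k, 1 ≤ k → k ≤ i → Nat.Coprime (a i) (b k))
    (hpos : ∀ k, i < k → k ≤ p → 0 < a k) (x : ℕ → ℕ) :
    ∑ j ∈ range i, x j * compoundTerm a b p j ≠ compoundTerm a b p i := by
  intro heq
  have hdvd : ∏ k ∈ Icc i p, a k ∣ compoundTerm a b p i :=
    heq ▸ dvd_sum fun j hj => (prod_Icc_dvd_compoundTerm (mem_range.1 hj)).mul_left _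
  rw [compoundTerm, prod_Icc_eq_mul_prod_Icc_succ a hip] at hdvd
  have htail : 0 < ∏ k ∈ Icc (i + 1) p, a k :=
    prod_pos fun k hk => hpos k (by simp only [mem_Icc] at hk; omega) (mem_Icc.1 hk).2
  have hai_dvd : a i ∣ ∏ k ∈ Icc 1 i, b k := (Nat.mul_dvd_mul_iff_right htail).1 hdvd
  exact hai <| (Nat.Coprime.prod_right fun k hk =>
    hcop k (mem_Icc.1 hk).1 (mem_Icc.1 hk).2).eq_one_of_dvd hai_dvd

end CompoundTerm

lemma sum_range_eq_of_sum_range_eq_of_lt {n x : ℕ → ℕ} {i m : ℕ} (him : i < m)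
    (hlt : ∀ j, i < j → j < m → n i < n j) (hxi : x i = 0)
    (h : ∑ j ∈ range m, x j * n j = n i) : ∑ j ∈ range i, x j * n j = n i := by
  rw [← h]
  refine sum_subset (fun j hj => ?_) fun j hjm hji => ?_
  · exact mem_range.2 ((mem_range.1 hj).trans him)
  obtain rfl | hij := eq_or_lt_of_le (not_lt.1 (mem_range.not.1 hji))
  · rw [hxi, zero_mul]
  have hle : x j * n j ≤ ∑ k ∈ range m, x k * n k :=
    single_le_sum (f := fun k => x k * n k) (fun k _ => Nat.zero_le _) hjm
  rw [h] at hle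
  have hxj : x j < 1 := Nat.lt_of_mul_lt_mul_right (a := n j) <| by
    rw [one_mul]
    exact hle.trans_lt (hlt j hij (mem_range.1 hjm))
  rw [Nat.lt_one_iff.1 hxj, zero_mul]

theorem stmt5_general (p : ℕ) (a b : ℕ → ℕ)
    (ha : ∀ i, 1 ≤ i → i ≤ p → 2 ≤ a i ∧ a i < b i)
    (hab : ∀ i j, 1 ≤ j → j ≤ i → i ≤ p → Nat.gcd (a i) (b j) = 1)
    (n : ℕ → ℕ)
    (hn : ∀ i, i ≤ p → n i = (∏ j ∈ Finset.Icc 1 i, b j) * ∏ j ∈ Finset.Icc (i+1) p, a j) :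
    (∀ i, 1 ≤ i → i ≤ p → ∀ x : ℕ → ℕ,
        ∑ j ∈ Finset.range i, x j * n j ≠ n i) ∧
    (∀ i, i ≤ p → ∀ x : ℕ → ℕ, x i = 0 →
        ∑ j ∈ Finset.range (p+1), x j * n j ≠ n i) := by
  have ha_pos : ∀ k, 1 ≤ k → k ≤ p → 0 < a k := fun k h1 h2 => by
    have := ha k h1 h2; omega
  have ha_lt : ∀ k, 1 ≤ k → k ≤ p → a k < b k := fun k h1 h2 => (ha k h1 h2).2
  have hb_pos : ∀ k, 1 ≤ k → k ≤ p → 0 < b k := fun k h1 h2 =>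
    (ha_pos k h1 h2).trans (ha_lt k h1 h2)
  have hn_eq : ∀ i ≤ p, n i = compoundTerm a b p i := hn
  have hsum : ∀ m ≤ p + 1, ∀ x : ℕ → ℕ,
      ∑ j ∈ range m, x j * n j = ∑ j ∈ range m, x j * compoundTerm a b p j :=
    fun m hm x => sum_congr rfl fun j hj => by rw [hn_eq j (by rw [mem_range] at hj; omega)]
  have not_mem_lower : ∀ i, 1 ≤ i → i ≤ p → ∀ x : ℕ → ℕ, ∑ j ∈ range i, x j * n j ≠ n i := by
    intro i h1 hip x
    rw [hsum i (by omega), hn_eq i hip]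
    exact sum_range_ne_compoundTerm hip (by have := ha i h1 hip; omega)
      (fun k hk1 hki => hab i k hk1 hki hip) (fun k hik hkp => ha_pos k (by omega) hkp) x
  refine ⟨not_mem_lower, fun i hip x hxi heq => ?_⟩
  have hlt : ∀ j, i < j → j < p + 1 → n i < n j := fun j hij hjp => by
    rw [hn_eq i hip, hn_eq j (by omega)]
    exact strictMonoOn_compoundTerm ha_pos ha_lt hip (Set.mem_Iic.2 (by omega)) hij
  have hred := sum_range_eq_of_sum_range_eq_of_lt (by omega) hlt hxi heq
  rcases Nat.eq_zero_or_pos i with rfl | h1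
  · rw [sum_range_zero, hn_eq 0 hip] at hred
    exact (compoundTerm_pos ha_pos hb_pos hip).ne hred
  · exact not_mem_lower i h1 hip x hred

theorem stmt5 (p : ℕ) (hp : 1 ≤ p) (a b : ℕ → ℕ)
    (ha : ∀ i, 1 ≤ i → i ≤ p → 2 ≤ a i ∧ a i < b i)
    (hab : ∀ i j, 1 ≤ j → j ≤ i → i ≤ p → Nat.gcd (a i) (b j) = 1)
    (n : ℕ → ℕ)
    (hn : ∀ i, i ≤ p → n i = (∏ j ∈ Finset.Icc 1 i, b j) * ∏ j ∈ Finset.Icc (i+1) p, a j) :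
    (∀ i, 1 ≤ i → i ≤ p → ∀ x : ℕ → ℕ,
        ∑ j ∈ Finset.range i, x j * n j ≠ n i) ∧
    (∀ i, i ≤ p → ∀ x : ℕ → ℕ, x i = 0 →
        ∑ j ∈ Finset.range (p+1), x j * n j ≠ n i) :=
  stmt5_general p a b ha hab n hn
end

section
/- If {n_0,...,n_p} is a compound sequence, then for each i in [1,p], a_i = n_{i-1}/gcd(n_{i-1}, n_i) and b_i = n_i/gcd(n_{i-1}, n_i). -/
/-!
Consecutive terms share the factor `C = b₁⋯b_{i-1} · a_{i+1}⋯a_p`: `n_{i-1} = C · a_i` and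
`n_i = C · b_i`. Since `a_i` and `b_i` are coprime, `gcd(n_{i-1}, n_i) = C`, and dividing by it
leaves `a_i` and `b_i`.
-/

open Finset

section CompoundProducts

variable {M : Type*} [CommMonoid M] (a b : ℕ → M) {k p : ℕ}

theorem prod_Icc_one_mul_prod_Icc_succ_eq (hk : k < p) :
    (∏ j ∈ Icc 1 k, b j) * ∏ j ∈ Icc (k + 1) p, a j =
      (∏ j ∈ Icc 1 k, b j) * (∏ j ∈ Icc (k + 2) p, a j) * a (k + 1) := by
  rw [← mul_prod_Ioc_eq_prod_Icc (f := a) hk, ← Icc_add_one_left_eq_Ioc]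
  ac_rfl

theorem prod_Icc_one_succ_mul_prod_Icc_eq :
    (∏ j ∈ Icc 1 (k + 1), b j) * ∏ j ∈ Icc (k + 2) p, a j =
      (∏ j ∈ Icc 1 k, b j) * (∏ j ∈ Icc (k + 2) p, a j) * b (k + 1) := by
  rw [prod_Icc_succ_top (by omega)]
  ac_rfl

end CompoundProducts

theorem stmt6_general (p : ℕ) (a b : ℕ → ℕ)
    (ha : ∀ i, 1 ≤ i → i ≤ p → 2 ≤ a i ∧ a i < b i)
    (hab : ∀ i j, 1 ≤ j → j ≤ i → i ≤ p → Nat.gcd (a i) (b j) = 1)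
    (n : ℕ → ℕ)
    (hn : ∀ i, i ≤ p → n i = (∏ j ∈ Finset.Icc 1 i, b j) * ∏ j ∈ Finset.Icc (i+1) p, a j)
    (i : ℕ) (hi1 : 1 ≤ i) (hip : i ≤ p) :
    a i = n (i-1) / Nat.gcd (n (i-1)) (n i) ∧
    b i = n i / Nat.gcd (n (i-1)) (n i) := by
  obtain ⟨k, rfl⟩ : ∃ k, i = k + 1 := ⟨i - 1, by omega⟩
  have hpos : ∀ j, 1 ≤ j → j ≤ p → 0 < a j ∧ 0 < b j := fun j h1 h2 => by
    have := ha j h1 h2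
    omega
  set C := (∏ j ∈ Icc 1 k, b j) * ∏ j ∈ Icc (k + 2) p, a j
  have hC : 0 < C := by
    refine Nat.mul_pos (prod_pos fun j hj => ?_) (prod_pos fun j hj => ?_) <;> rw [mem_Icc] at hj
    · exact (hpos j hj.1 (by omega)).2
    · exact (hpos j (by omega) hj.2).1
  have hprev : n k = C * a (k + 1) := by
    rw [hn k (by omega), prod_Icc_one_mul_prod_Icc_succ_eq a b hip]
  have hnext : n (k + 1) = C * b (k + 1) := by
    rw [hn (k + 1) hip, prod_Icc_one_succ_mul_prod_Icc_eq]
  have hgcd : Nat.gcd (n k) (n (k + 1)) = C := by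
    rw [hprev, hnext, Nat.gcd_mul_left, hab _ _ hi1 le_rfl hip, mul_one]
  rw [Nat.add_sub_cancel, hgcd, hprev, hnext, Nat.mul_div_cancel_left _ hC,
    Nat.mul_div_cancel_left _ hC]
  exact ⟨rfl, rfl⟩

theorem stmt6 (p : ℕ) (hp : 1 ≤ p) (a b : ℕ → ℕ)
    (ha : ∀ i, 1 ≤ i → i ≤ p → 2 ≤ a i ∧ a i < b i)
    (hab : ∀ i j, 1 ≤ j → j ≤ i → i ≤ p → Nat.gcd (a i) (b j) = 1)
    (n : ℕ → ℕ)
    (hn : ∀ i, i ≤ p → n i = (∏ j ∈ Finset.Icc 1 i, b j) * ∏ j ∈ Finset.Icc (i+1) p, a j)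
    (i : ℕ) (hi1 : 1 ≤ i) (hip : i ≤ p) :
    a i = n (i-1) / Nat.gcd (n (i-1)) (n i) ∧
    b i = n i / Nat.gcd (n (i-1)) (n i) :=
  stmt6_general p a b ha hab n hn i hi1 hip
end

section
/- Let n_0 < n_1 < ... < n_p be positive integers that minimally generate a numerical semigroup (gcd 1, and no n_i is in the submonoid generated by the others). Then {n_0,...,n_p} is a compound sequence if and only if n_1·n_2⋯n_{p-1} = gcd(n_0,n_1)·gcd(n_1,n_2)⋯gcd(n_{p-1},n_p). -/
/-!
If `n i = b 1 ⋯ b i * a (i + 1) ⋯ a p` with `gcd (a i) (b i) = 1`, then `n (i - 1)` and `n i`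
share the factor `b 1 ⋯ b (i - 1) * a (i + 1) ⋯ a p` and differ by the coprime factors `a i`,
`b i`; so this factor is their gcd, and the product of these gcds over `i` regroups into
`n 1 ⋯ n (p - 1)`.

Conversely, write `n i / n (i - 1) = b i / a i` in lowest terms, i.e. divide `n (i - 1)` and `n i`
by their gcd. The product identity then says exactly `n 0 = a 1 ⋯ a p`, and the recurrence
`n i * a i = b i * n (i - 1)` propagates this to the compound form of every `n i`. Minimality
excludes `a i = 1` (which would mean `n (i - 1) ∣ n i`), monotonicity gives `a i < b i`, and in
the compound form each `n k` is divisible by `a i` or by `b j` when `j ≤ i`, so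
`gcd (a i) (b j)` divides `gcd (n 0, …, n p) = 1`.
-/

open Finset

section IntervalProducts

variable {M : Type*} [CommMonoid M] (f : ℕ → M)

theorem prod_Icc_one_eq_prod_range (p : ℕ) :
    ∏ j ∈ Icc 1 p, f j = ∏ i ∈ range p, f (i + 1) := by
  rw [range_eq_Ico, prod_Ico_add', zero_add, Ico_add_one_right_eq_Icc]

theorem prod_Icc_succ_bot {a b : ℕ} (hab : a ≤ b) :
    ∏ k ∈ Icc a b, f k = f a * ∏ k ∈ Icc (a + 1) b, f k := by
  rw [Icc_eq_cons_Ioc hab, prod_cons, Icc_add_one_left_eq_Ioc]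

theorem prod_Icc_consecutive {m n k : ℕ} (hmn : m ≤ n + 1) (hnk : n ≤ k) :
    (∏ i ∈ Icc m n, f i) * ∏ i ∈ Icc (n + 1) k, f i = ∏ i ∈ Icc m k, f i := by
  simpa only [Ico_add_one_right_eq_Icc] using
    prod_Ico_consecutive f hmn (by omega : n + 1 ≤ k + 1)

end IntervalProducts

def compoundSeq {M : Type*} [CommMonoid M] (a b : ℕ → M) (p i : ℕ) : M :=
  (∏ j ∈ Icc 1 i, b j) * ∏ j ∈ Icc (i + 1) p, a j

section CompoundSeq

variable {M : Type*} [CommMonoid M] {a b : ℕ → M} {p i : ℕ}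

theorem compoundSeq_eq_mul (h : i < p) :
    compoundSeq a b p i =
      (∏ j ∈ Icc 1 i, b j) * (∏ j ∈ Icc (i + 1 + 1) p, a j) * a (i + 1) := by
  rw [compoundSeq, prod_Icc_succ_bot a h]
  ac_rfl

theorem compoundSeq_succ_eq_mul :
    compoundSeq a b p (i + 1) =
      (∏ j ∈ Icc 1 i, b j) * (∏ j ∈ Icc (i + 1 + 1) p, a j) * b (i + 1) := by
  rw [compoundSeq, prod_Icc_succ_top (by omega)]
  ac_rfl

theorem dvd_compoundSeq_or_dvd_compoundSeq {j : ℕ} (hj : 1 ≤ j) (hji : j ≤ i) (hi : i ≤ p)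
    (k : ℕ) : b j ∣ compoundSeq a b p k ∨ a i ∣ compoundSeq a b p k := by
  rcases le_or_gt j k with hjk | hkj
  · exact .inl <| (dvd_prod_of_mem b (mem_Icc.2 ⟨hj, hjk⟩)).mul_right _
  · exact .inr <| (dvd_prod_of_mem a (mem_Icc.2 ⟨by omega, hi⟩)).mul_left _

end CompoundSeq

theorem mul_prod_Icc_eq_mul_prod_Icc {M : Type*} [CommMonoid M] {n a b : ℕ → M} {k : ℕ}
    (h : ∀ i < k, n (i + 1) * a (i + 1) = b (i + 1) * n i) :
    n k * ∏ j ∈ Icc 1 k, a j = n 0 * ∏ j ∈ Icc 1 k, b j := by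
  induction k with
  | zero => simp
  | succ k ih =>
    rw [prod_Icc_succ_top (by omega), prod_Icc_succ_top (by omega)]
    calc n (k + 1) * ((∏ j ∈ Icc 1 k, a j) * a (k + 1))
        = n (k + 1) * a (k + 1) * ∏ j ∈ Icc 1 k, a j := by ac_rfl
      _ = b (k + 1) * (n k * ∏ j ∈ Icc 1 k, a j) := by rw [h k k.lt_add_one, mul_assoc]
      _ = b (k + 1) * (n 0 * ∏ j ∈ Icc 1 k, b j) := by rw [ih fun i hi => h i (by omega)]
      _ = n 0 * ((∏ j ∈ Icc 1 k, b j) * b (k + 1)) := by ac_rfl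

theorem eq_compoundSeq_of_mul_eq {M : Type*} [CommMonoidWithZero M] [IsCancelMulZero M]
    {n a b : ℕ → M} {p : ℕ} (hn0 : n 0 ≠ 0) (h0 : n 0 = ∏ j ∈ Icc 1 p, a j)
    (h : ∀ i < p, n (i + 1) * a (i + 1) = b (i + 1) * n i) {i : ℕ} (hi : i ≤ p) :
    n i = compoundSeq a b p i := by
  rw [← prod_Icc_consecutive a (by omega) hi] at h0
  refine mul_right_cancel₀ (left_ne_zero_of_mul (h0 ▸ hn0)) ?_
  rw [mul_prod_Icc_eq_mul_prod_Icc fun j hj => h j (by omega), h0, compoundSeq]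
  ac_rfl

theorem gcd_compoundSeq_succ {a b : ℕ → ℕ} {p i : ℕ} (h : i < p)
    (hab : Nat.Coprime (a (i + 1)) (b (i + 1))) :
    Nat.gcd (compoundSeq a b p i) (compoundSeq a b p (i + 1)) =
      (∏ j ∈ Icc 1 i, b j) * ∏ j ∈ Icc (i + 1 + 1) p, a j := by
  rw [compoundSeq_eq_mul h, compoundSeq_succ_eq_mul, Nat.gcd_mul_left, hab, mul_one]

theorem prod_Ico_eq_prod_gcd_of_compoundSeq {n a b : ℕ → ℕ} {p : ℕ} (hp : 1 ≤ p)
    (hab : ∀ i, 1 ≤ i → i ≤ p → Nat.Coprime (a i) (b i))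
    (hn : ∀ i ≤ p, n i = compoundSeq a b p i) :
    ∏ j ∈ Ico 1 p, n j = ∏ j ∈ Icc 1 p, Nat.gcd (n (j - 1)) (n j) := by
  obtain ⟨q, rfl⟩ := Nat.exists_eq_add_of_le' hp
  have hgcd : ∀ i ∈ range (q + 1), Nat.gcd (n i) (n (i + 1)) =
      (∏ j ∈ Icc 1 i, b j) * ∏ j ∈ Icc (i + 1 + 1) (q + 1), a j := fun i hi => by
    rw [mem_range] at hi
    rw [hn i hi.le, hn (i + 1) hi, gcd_compoundSeq_succ hi (hab _ (by omega) hi)]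
  have hn' : ∀ i ∈ range q, n (i + 1) = compoundSeq a b (q + 1) (i + 1) := fun i hi =>
    hn (i + 1) (by simp at hi; omega)
  rw [Ico_add_one_right_eq_Icc, prod_Icc_one_eq_prod_range, prod_Icc_one_eq_prod_range]
  simp only [Nat.add_sub_cancel]
  rw [prod_congr rfl hgcd, prod_mul_distrib, prod_range_succ', prod_range_succ,
    prod_congr rfl hn']
  simp [compoundSeq, prod_mul_distrib]

theorem coprime_of_compoundSeq {p : ℕ} {n a b : ℕ → ℕ}
    (hgcd : (range (p + 1)).gcd n = 1) (hn : ∀ i ≤ p, n i = compoundSeq a b p i)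
    {i j : ℕ} (hj : 1 ≤ j) (hji : j ≤ i) (hi : i ≤ p) : Nat.Coprime (a i) (b j) := by
  refine Nat.eq_one_of_dvd_one (hgcd ▸ Finset.dvd_gcd fun k hk => ?_)
  rw [hn k (Nat.lt_succ_iff.1 (mem_range.1 hk))]
  rcases dvd_compoundSeq_or_dvd_compoundSeq (a := a) (b := b) hj hji hi k with hb | ha
  · exact (Nat.gcd_dvd_right _ _).trans hb
  · exact (Nat.gcd_dvd_left _ _).trans ha

def stepDen (n : ℕ → ℕ) (j : ℕ) : ℕ := n (j - 1) / Nat.gcd (n (j - 1)) (n j)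

def stepNum (n : ℕ → ℕ) (j : ℕ) : ℕ := n j / Nat.gcd (n (j - 1)) (n j)

section Steps

variable (n : ℕ → ℕ) {j : ℕ}

theorem stepDen_mul_gcd (j : ℕ) : stepDen n j * Nat.gcd (n (j - 1)) (n j) = n (j - 1) :=
  Nat.div_mul_cancel (Nat.gcd_dvd_left _ _)

theorem stepNum_mul_gcd (j : ℕ) : stepNum n j * Nat.gcd (n (j - 1)) (n j) = n j :=
  Nat.div_mul_cancel (Nat.gcd_dvd_right _ _)

theorem mul_stepDen (j : ℕ) : n j * stepDen n j = stepNum n j * n (j - 1) := by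
  conv_lhs => rw [← stepNum_mul_gcd n j]
  rw [mul_right_comm, mul_assoc, stepDen_mul_gcd]

variable {n}

theorem two_le_stepDen (hpos : 0 < n (j - 1)) (hdvd : ¬ n (j - 1) ∣ n j) :
    2 ≤ stepDen n j := by
  have hne : stepDen n j ≠ 1 := fun h1 => hdvd <| by
    rw [← stepDen_mul_gcd n j, h1, one_mul]
    exact Nat.gcd_dvd_right _ _
  have : 0 < stepDen n j :=
    Nat.div_pos (Nat.gcd_le_left (n j) hpos) (Nat.gcd_pos_of_pos_left _ hpos)
  omega

theorem stepDen_lt_stepNum (h : n (j - 1) < n j) : stepDen n j < stepNum n j :=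
  Nat.div_lt_div_of_lt_of_dvd (Nat.gcd_dvd_right _ _) h

theorem prod_stepDen_eq {p : ℕ} (hp : 1 ≤ p) (hn : ∀ j ∈ Icc 1 p, n j ≠ 0)
    (h : ∏ j ∈ Ico 1 p, n j = ∏ j ∈ Icc 1 p, Nat.gcd (n (j - 1)) (n j)) :
    ∏ j ∈ Icc 1 p, stepDen n j = n 0 := by
  have hgcd : ∏ j ∈ Icc 1 p, Nat.gcd (n (j - 1)) (n j) ≠ 0 :=
    prod_ne_zero_iff.2 fun j hj => Nat.gcd_ne_zero_right (hn j hj)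
  refine mul_right_cancel₀ hgcd ?_
  rw [← prod_mul_distrib, prod_congr rfl fun j _ => stepDen_mul_gcd n j, ← h,
    prod_Icc_one_eq_prod_range]
  exact prod_range_eq_mul_Ico n hp

end Steps

theorem not_dvd_of_forall_sum_ne {p : ℕ} {n : ℕ → ℕ}
    (hmin : ∀ i, i ≤ p → ∀ x : ℕ → ℕ, x i = 0 →
      ∑ j ∈ range (p + 1), x j * n j ≠ n i)
    {i j : ℕ} (hi : i ≤ p) (hj : j ≤ p) (hji : j ≠ i) : ¬ n j ∣ n i := by
  rintro ⟨c, hc⟩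
  refine hmin i hi (Pi.single j c) (by simp [hji.symm]) ?_
  rw [sum_eq_single_of_mem j (mem_range.2 (by omega)) fun k _ hk => by simp [hk], hc,
    Pi.single_eq_same, mul_comm]

theorem stmt7 (p : ℕ) (hp : 1 ≤ p) (n : ℕ → ℕ)
    (hpos : ∀ i, i ≤ p → 0 < n i)
    (hmono : ∀ i, 1 ≤ i → i ≤ p → n (i - 1) < n i)
    (hgcd : (Finset.range (p + 1)).gcd n = 1)
    (hmin : ∀ i, i ≤ p → ∀ x : ℕ → ℕ, x i = 0 →
        ∑ j ∈ Finset.range (p+1), x j * n j ≠ n i) :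
    (∃ a b : ℕ → ℕ,
        (∀ i, 1 ≤ i → i ≤ p → 2 ≤ a i ∧ a i < b i) ∧
        (∀ i j, 1 ≤ j → j ≤ i → i ≤ p → Nat.gcd (a i) (b j) = 1) ∧
        (∀ i, i ≤ p → n i = (∏ j ∈ Finset.Icc 1 i, b j) * ∏ j ∈ Finset.Icc (i+1) p, a j))
    ↔ ∏ j ∈ Finset.Ico 1 p, n j = ∏ j ∈ Finset.Icc 1 p, Nat.gcd (n (j-1)) (n j) := by
  constructor
  · rintro ⟨a, b, -, hcop, hn⟩
    exact prod_Ico_eq_prod_gcd_of_compoundSeq hp (fun i h1 h2 => hcop i i h1 le_rfl h2) hn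
  · intro h
    have hn0 := prod_stepDen_eq hp (fun j hj => (hpos j (mem_Icc.1 hj).2).ne') h
    have hn : ∀ i ≤ p, n i = compoundSeq (stepDen n) (stepNum n) p i := fun i hi =>
      eq_compoundSeq_of_mul_eq (hpos 0 p.zero_le).ne' hn0.symm
        (fun i _ => mul_stepDen n (i + 1)) hi
    refine ⟨stepDen n, stepNum n, fun i h1 h2 => ⟨?_, stepDen_lt_stepNum (hmono i h1 h2)⟩,
      fun i j h1 hji hi => coprime_of_compoundSeq hgcd hn h1 hji hi, hn⟩
    exact two_le_stepDen (hpos _ (by omega))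
      (not_dvd_of_forall_sum_ne hmin h2 (by omega) (by omega))
end

section
/- Let S = ⟨n_0,...,n_p⟩ be a numerical semigroup on a compound sequence and fix i in [1,p]. If x = (x_0,...,x_p) ∈ ℕ^{p+1} satisfies Σ_j x_j n_j = a_i n_i, then either (a) x_j = 0 for all j < i and Σ_j x_j ≤ a_i, or (b) x_j = 0 for all j ≥ i and Σ_j x_j ≥ b_i. -/
def Ng (a b : ℕ → ℕ) (p j : ℕ) : ℕ :=
  (∏ t ∈ Finset.Icc 1 j, b t) * ∏ t ∈ Finset.Icc (j+1) p, a t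

lemma prod_shift (f : ℕ → ℕ) (c d : ℕ) :
    ∏ t ∈ Finset.Icc (c+1) (d+1), f t = ∏ t ∈ Finset.Icc c d, f (1+t) := by
  rw [Nat.add_comm c 1, Nat.add_comm d 1, ← Finset.map_add_left_Icc c d 1, Finset.prod_map]
  rfl

lemma Ng_top {a b : ℕ → ℕ} {p j : ℕ} (h : j ≤ p) :
    Ng a b (p+1) j = Ng a b p j * a (p+1) := by
  unfold Ng
  rw [Finset.prod_Icc_succ_top (by omega : j + 1 ≤ p + 1), mul_assoc]

lemma Ng_topb (a b : ℕ → ℕ) (p : ℕ) :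
    Ng a b (p+1) (p+1) = Ng a b p p * b (p+1) := by
  unfold Ng
  rw [Finset.prod_Icc_succ_top (by omega : 1 ≤ p + 1)]
  rw [Finset.Icc_eq_empty (by omega : ¬ (p+1+1) ≤ p+1),
      Finset.Icc_eq_empty (by omega : ¬ (p+1) ≤ p)]
  simp [mul_assoc]

lemma Ng_bot (a b : ℕ → ℕ) (p j : ℕ) :
    Ng a b (p+1) (j+1) = b 1 * Ng (fun t => a (1+t)) (fun t => b (1+t)) p j := by
  unfold Ng
  have e1 : ∏ t ∈ Finset.Icc 1 (j+1), b t = b 1 * ∏ t ∈ Finset.Icc 1 j, b (1+t) := by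
    rw [← Finset.Ico_add_one_right_eq_Icc, Finset.prod_eq_prod_Ico_succ_bot (by omega)]
    rw [Finset.Ico_add_one_right_eq_Icc, prod_shift]
  rw [e1, prod_shift, mul_assoc]

lemma Ng_bot0 (a b : ℕ → ℕ) (p : ℕ) :
    Ng a b (p+1) 0 = a 1 * Ng (fun t => a (1+t)) (fun t => b (1+t)) p 0 := by
  unfold Ng
  simp only [Finset.Icc_eq_empty (by omega : ¬ (1:ℕ) ≤ 0), Finset.prod_empty, one_mul]
  rw [← Finset.Ico_add_one_right_eq_Icc, Finset.prod_eq_prod_Ico_succ_bot (by omega), Finset.Ico_add_one_right_eq_Icc,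
    prod_shift]

lemma key (p : ℕ) : 1 ≤ p → ∀ a b : ℕ → ℕ,
    (∀ i, 1 ≤ i → i ≤ p → 2 ≤ a i ∧ a i < b i) →
    (∀ i j, 1 ≤ j → j ≤ i → i ≤ p → Nat.gcd (a i) (b j) = 1) →
    ∀ i, 1 ≤ i → i ≤ p → ∀ x : ℕ → ℕ,
    (∑ j ∈ Finset.range (p+1), x j * Ng a b p j = a i * Ng a b p i) →
    ((∀ j, j < i → x j = 0) ∧ ∑ j ∈ Finset.range (p+1), x j ≤ a i) ∨
    ((∀ j, i ≤ j → j ≤ p → x j = 0) ∧ b i ≤ ∑ j ∈ Finset.range (p+1), x j) := by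
  induction p with
  | zero => omega
  | succ p ih =>
    intro _ a b ha hab i hi1 hip x hx
    rcases Nat.eq_zero_or_pos p with hp0 | hp1
    · -- base case p + 1 = 1, i = 1
      subst hp0
      have hi : i = 1 := by omega
      subst hi
      have hN0 : Ng a b 1 0 = a 1 := by
        unfold Ng
        rw [Finset.Icc_eq_empty (by omega : ¬ (1:ℕ) ≤ 0), Finset.Icc_self]
        simp
      have hN1 : Ng a b 1 1 = b 1 := by
        unfold Ng
        rw [Finset.Icc_eq_empty (by omega : ¬ (1+1:ℕ) ≤ 1), Finset.Icc_self]
        simp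
      rw [Finset.sum_range_succ, Finset.sum_range_succ, Finset.sum_range_zero,
        hN0, hN1, zero_add] at hx
      rw [Finset.sum_range_succ, Finset.sum_range_succ, Finset.sum_range_zero, zero_add]
      have hcop : Nat.Coprime (a 1) (b 1) := hab 1 1 le_rfl le_rfl le_rfl
      obtain ⟨ha2, hab1⟩ := ha 1 le_rfl le_rfl
      have hdvd : b 1 ∣ x 0 * a 1 := by
        refine ⟨a 1 - x 1, ?_⟩
        have h1 : x 1 ≤ a 1 := by
          by_contra h
          have : (a 1 + 1) * b 1 ≤ x 1 * b 1 := mul_le_mul_left (by omega) _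
          nlinarith
        rw [Nat.mul_sub, mul_comm (b 1) (a 1), mul_comm (b 1) (x 1)]
        omega
      have hbx0 : b 1 ∣ x 0 := (Nat.Coprime.dvd_of_dvd_mul_right hcop.symm) hdvd
      rcases Nat.eq_zero_or_pos (x 0) with h0 | h0
      · left
        rw [h0, zero_mul, zero_add] at hx
        have : x 1 = a 1 := Nat.eq_of_mul_eq_mul_right (by omega) hx
        constructor
        · intro j hj; interval_cases j; exact h0
        · omega
      · right
        have h1 : b 1 ≤ x 0 := Nat.le_of_dvd h0 hbx0
        have h3 : a 1 * b 1 ≤ x 0 * a 1 := by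
          calc a 1 * b 1 = b 1 * a 1 := mul_comm _ _
          _ ≤ x 0 * a 1 := mul_le_mul_left h1 _
        have h4 : x 1 * b 1 = 0 := by omega
        have hx1 : x 1 = 0 := by
          rcases Nat.mul_eq_zero.mp h4 with h | h
          · exact h
          · omega
        have hx0 : x 0 = b 1 := by
          have : x 0 * a 1 = b 1 * a 1 := by
            rw [mul_comm (b 1)]
            omega
          exact Nat.eq_of_mul_eq_mul_right (by omega) this
        constructor
        · intro j hj hj'; interval_cases j; exact hx1
        · omega
    · -- inductive step, p ≥ 1
      have ha' : ∀ i, 1 ≤ i → i ≤ p → 2 ≤ a i ∧ a i < b i := fun i h1 h2 => ha i h1 (by omega)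
      have hab' : ∀ i j, 1 ≤ j → j ≤ i → i ≤ p → Nat.gcd (a i) (b j) = 1 :=
        fun i j h1 h2 h3 => hab i j h1 h2 (by omega)
      obtain ⟨hA2, hAB⟩ := ha (p+1) (by omega) le_rfl
      by_cases hi : i ≤ p
      · -- top reduction: divide by a (p+1)
        have hAdvd : a (p+1) ∣ x (p+1) := by
          have h1 : a (p+1) ∣ ∑ j ∈ Finset.range (p+1), x j * Ng a b (p+1) j :=
            Finset.dvd_sum (fun j hj => by
              rw [Ng_top (Nat.lt_succ_iff.mp (Finset.mem_range.mp hj))]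
              exact (dvd_mul_left (a (p+1)) _).mul_left (x j))
          have h2 : a (p+1) ∣ a i * Ng a b (p+1) i := by
            rw [Ng_top hi]; exact (dvd_mul_left (a (p+1)) _).mul_left (a i)
          have hx' := hx
          rw [Finset.sum_range_succ] at hx'
          have h3 : a (p+1) ∣ x (p+1) * Ng a b (p+1) (p+1) := by
            have h4 : a (p+1) ∣ (∑ j ∈ Finset.range (p+1), x j * Ng a b (p+1) j)
                + x (p+1) * Ng a b (p+1) (p+1) := by rw [hx']; exact h2
            exact (Nat.dvd_add_right h1).mp h4
          have hcop : Nat.Coprime (a (p+1)) (Ng a b (p+1) (p+1)) := by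
            unfold Ng
            rw [Finset.Icc_eq_empty (by omega : ¬ (p+1+1) ≤ p+1), Finset.prod_empty, mul_one]
            exact Nat.Coprime.prod_right (fun t ht => hab (p+1) t (Finset.mem_Icc.mp ht).1
              (Finset.mem_Icc.mp ht).2 le_rfl)
          exact hcop.dvd_of_dvd_mul_right h3
        obtain ⟨q, hq⟩ := hAdvd
        set y : ℕ → ℕ := fun j => if j = p then x p + b (p+1) * q else x j with hydef
        have hyj : ∀ j, j ≠ p → y j = x j := fun j hj => by simp [hydef, hj]
        have hyp : y p = x p + b (p+1) * q := by simp [hydef]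
        have hy : ∑ j ∈ Finset.range (p+1), y j * Ng a b p j = a i * Ng a b p i := by
          apply Nat.eq_of_mul_eq_mul_right (show 0 < a (p+1) by omega)
          have e1 : (∑ j ∈ Finset.range (p+1), y j * Ng a b p j) * a (p+1)
              = ∑ j ∈ Finset.range (p+1), y j * Ng a b (p+1) j := by
            rw [Finset.sum_mul]
            exact Finset.sum_congr rfl (fun j hj => by
              rw [mul_assoc, ← Ng_top (Nat.lt_succ_iff.mp (Finset.mem_range.mp hj))])
          have e2 : ∑ j ∈ Finset.range (p+1), y j * Ng a b (p+1) j
              = (∑ j ∈ Finset.range (p+1), x j * Ng a b (p+1) j)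
                + (b (p+1) * q) * Ng a b (p+1) p := by
            rw [Finset.sum_range_succ, Finset.sum_range_succ
              (f := fun j => x j * Ng a b (p+1) j)]
            have e21 : ∑ j ∈ Finset.range p, y j * Ng a b (p+1) j
                = ∑ j ∈ Finset.range p, x j * Ng a b (p+1) j :=
              Finset.sum_congr rfl (fun j hj => by
                rw [hyj j (by have := Finset.mem_range.mp hj; omega)])
            rw [e21, hyp]
            ring
          have e3 : (b (p+1) * q) * Ng a b (p+1) p = x (p+1) * Ng a b (p+1) (p+1) := by
            rw [Ng_top (le_refl p), Ng_topb, hq]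
            ring
          rw [e1, e2, e3, ← Finset.sum_range_succ (fun j => x j * Ng a b (p+1) j), hx, Ng_top hi]
          ring
        have s1 : ∑ j ∈ Finset.range (p+1+1), x j
            = (∑ j ∈ Finset.range p, x j) + x p + x (p+1) := by
          rw [Finset.sum_range_succ, Finset.sum_range_succ]
        have s2 : ∑ j ∈ Finset.range (p+1), y j
            = (∑ j ∈ Finset.range p, x j) + (x p + b (p+1) * q) := by
          rw [Finset.sum_range_succ]
          congr 1
          exact Finset.sum_congr rfl (fun j hj => hyj j
            (by have := Finset.mem_range.mp hj; omega))
        rcases ih hp1 a b ha' hab' i hi1 hi y hy with ⟨h1, h2⟩ | ⟨h1, h2⟩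
        · left
          refine ⟨fun j hj => ?_, ?_⟩
          · rw [← hyj j (by omega)]; exact h1 j hj
          · have hle : x (p+1) ≤ b (p+1) * q := by
              rw [hq]; exact Nat.mul_le_mul_right q (by omega)
            omega
        · right
          have hyp0 : y p = 0 := h1 p hi le_rfl
          have h5 : x p + b (p+1) * q = 0 := by rw [← hyp]; exact hyp0
          have hxp : x p = 0 := by omega
          have hq0 : q = 0 := by
            rcases Nat.mul_eq_zero.mp (show b (p+1) * q = 0 by omega) with h | h
            · omega
            · exact h
          have hxp1 : x (p+1) = 0 := by rw [hq, hq0, mul_zero]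
          refine ⟨fun j hj hj' => ?_, ?_⟩
          · rcases Nat.lt_or_ge j p with h | h
            · rw [← hyj j (by omega)]; exact h1 j hj (by omega)
            · have hcases : j = p ∨ j = p+1 := by omega
              rcases hcases with rfl | rfl
              · exact hxp
              · exact hxp1
          · omega
      · -- bottom reduction: i = p+1, divide by b 1
        have hieq : i = p + 1 := by omega
        subst hieq
        obtain ⟨hb2, hbb⟩ := ha 1 le_rfl (by omega)
        set a' : ℕ → ℕ := fun t => a (1+t) with ha'def
        set b' : ℕ → ℕ := fun t => b (1+t) with hb'def
        have hA' : ∀ i, 1 ≤ i → i ≤ p → 2 ≤ a' i ∧ a' i < b' i :=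
          fun i h1 h2 => ha (1+i) (by omega) (by omega)
        have hAB' : ∀ i j, 1 ≤ j → j ≤ i → i ≤ p → Nat.gcd (a' i) (b' j) = 1 :=
          fun i j h1 h2 h3 => hab (1+i) (1+j) (by omega) (by omega) (by omega)
        have hNg' : ∀ j, Ng a b (p+1) (j+1) = b 1 * Ng a' b' p j := fun j => Ng_bot a b p j
        have hNg0 : Ng a b (p+1) 0 = a 1 * Ng a' b' p 0 := Ng_bot0 a b p
        have hb1dvd : b 1 ∣ x 0 := by
          have h1 : b 1 ∣ ∑ j ∈ Finset.range (p+1), x (j+1) * Ng a b (p+1) (j+1) :=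
            Finset.dvd_sum (fun j hj => by
              rw [hNg' j]; exact (dvd_mul_right (b 1) _).mul_left (x (j+1)))
          have h2 : b 1 ∣ a (p+1) * Ng a b (p+1) (p+1) := by
            rw [hNg' p]; exact (dvd_mul_right (b 1) _).mul_left _
          have hx' := hx
          rw [Finset.sum_range_succ' (fun j => x j * Ng a b (p+1) j) (p+1)] at hx'
          have h3 : b 1 ∣ x 0 * Ng a b (p+1) 0 := by
            have h4 : b 1 ∣ (∑ j ∈ Finset.range (p+1), x (j+1) * Ng a b (p+1) (j+1))
                + x 0 * Ng a b (p+1) 0 := by rw [hx']; exact h2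
            exact (Nat.dvd_add_right h1).mp h4
          have hcop : Nat.Coprime (b 1) (Ng a b (p+1) 0) := by
            unfold Ng
            rw [Finset.Icc_eq_empty (by omega : ¬ (1:ℕ) ≤ 0), Finset.prod_empty, one_mul]
            exact Nat.Coprime.prod_right (fun t ht =>
              Nat.coprime_comm.mp (hab t 1 le_rfl (Finset.mem_Icc.mp ht).1
                (Finset.mem_Icc.mp ht).2))
          exact hcop.dvd_of_dvd_mul_right h3
        obtain ⟨q, hq⟩ := hb1dvd
        set y : ℕ → ℕ := fun j => if j = 0 then x 1 + a 1 * q else x (j+1) with hydef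
        have hy0 : y 0 = x 1 + a 1 * q := by simp [hydef]
        have hyj : ∀ j, j ≠ 0 → y j = x (j+1) := fun j hj => by simp [hydef, hj]
        have hap : a' p = a (p+1) := by rw [ha'def]; simp [Nat.add_comm]
        have hbp : b' p = b (p+1) := by rw [hb'def]; simp [Nat.add_comm]
        have hy : ∑ j ∈ Finset.range (p+1), y j * Ng a' b' p j = a' p * Ng a' b' p p := by
          apply Nat.eq_of_mul_eq_mul_right (show 0 < b 1 by omega)
          have e1 : (∑ j ∈ Finset.range (p+1), y j * Ng a' b' p j) * b 1
              = ∑ j ∈ Finset.range (p+1), y j * Ng a b (p+1) (j+1) := by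
            rw [Finset.sum_mul]
            exact Finset.sum_congr rfl (fun j hj => by rw [hNg' j]; ring)
          have e2 : ∑ j ∈ Finset.range (p+1), y j * Ng a b (p+1) (j+1)
              = (∑ j ∈ Finset.range (p+1), x (j+1) * Ng a b (p+1) (j+1))
                + (a 1 * q) * Ng a b (p+1) 1 := by
            rw [Finset.sum_range_succ' (fun j => y j * Ng a b (p+1) (j+1)) p,
                Finset.sum_range_succ' (fun j => x (j+1) * Ng a b (p+1) (j+1)) p]
            have e21 : ∑ j ∈ Finset.range p, y (j+1) * Ng a b (p+1) (j+1+1)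
                = ∑ j ∈ Finset.range p, x (j+1+1) * Ng a b (p+1) (j+1+1) :=
              Finset.sum_congr rfl (fun j hj => by rw [hyj (j+1) (by omega)])
            rw [e21, hy0]
            ring
          have e3 : (a 1 * q) * Ng a b (p+1) 1 = x 0 * Ng a b (p+1) 0 := by
            rw [hNg' 0, hNg0, hq]
            ring
          rw [e1, e2, e3, ← Finset.sum_range_succ' (fun j => x j * Ng a b (p+1) j) (p+1),
            hx, hNg' p, hap]
          ring
        have s1 : ∑ j ∈ Finset.range (p+1+1), x j
            = (∑ j ∈ Finset.range (p+1), x (j+1)) + x 0 :=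
          Finset.sum_range_succ' _ _
        have s2 : ∑ j ∈ Finset.range (p+1), y j
            = (∑ j ∈ Finset.range p, x (j+1+1)) + (x 1 + a 1 * q) := by
          have e : ∑ j ∈ Finset.range p, y (j+1) = ∑ j ∈ Finset.range p, x (j+1+1) :=
            Finset.sum_congr rfl (fun j hj => hyj (j+1) (by omega))
          rw [Finset.sum_range_succ' y p, hy0, e]
        have s3 : ∑ j ∈ Finset.range (p+1), x (j+1)
            = (∑ j ∈ Finset.range p, x (j+1+1)) + x 1 :=
          Finset.sum_range_succ' _ _
        rcases ih hp1 a' b' hA' hAB' p hp1 le_rfl y hy with ⟨h1, h2⟩ | ⟨h1, h2⟩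
        · left
          have hy00 : y 0 = 0 := h1 0 hp1
          rw [hy0] at hy00
          have hx1 : x 1 = 0 := by omega
          have hq0 : q = 0 := by
            rcases Nat.mul_eq_zero.mp (show a 1 * q = 0 by omega) with h | h
            · omega
            · exact h
          have hx0 : x 0 = 0 := by rw [hq, hq0, mul_zero]
          rw [hap] at h2
          refine ⟨fun j hj => ?_, ?_⟩
          · rcases Nat.eq_zero_or_pos j with rfl | hjpos
            · exact hx0
            · obtain ⟨k, rfl⟩ : ∃ k, j = k + 1 := ⟨j - 1, by omega⟩
              rcases Nat.eq_zero_or_pos k with rfl | hk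
              · exact hx1
              · rw [← hyj k (by omega)]; exact h1 k (by omega)
          · omega
        · right
          have hyp0 : y p = 0 := h1 p le_rfl le_rfl
          have hxp1 : x (p+1) = 0 := by rw [← hyj p (by omega)]; exact hyp0
          rw [hbp] at h2
          refine ⟨fun j hj hj' => ?_, ?_⟩
          · have : j = p+1 := by omega
            subst this
            exact hxp1
          · have hle : a 1 * q ≤ b 1 * q := Nat.mul_le_mul_right q (by omega)
            have hx0q : x 0 = b 1 * q := hq
            omega

theorem stmt8 (p : ℕ) (hp : 1 ≤ p) (a b : ℕ → ℕ)
    (ha : ∀ i, 1 ≤ i → i ≤ p → 2 ≤ a i ∧ a i < b i)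
    (hab : ∀ i j, 1 ≤ j → j ≤ i → i ≤ p → Nat.gcd (a i) (b j) = 1)
    (n : ℕ → ℕ)
    (hn : ∀ i, i ≤ p → n i = (∏ j ∈ Finset.Icc 1 i, b j) * ∏ j ∈ Finset.Icc (i+1) p, a j)
    (i : ℕ) (hi1 : 1 ≤ i) (hip : i ≤ p)
    (x : ℕ → ℕ) (hsupp : ∀ j, p < j → x j = 0)
    (hx : ∑ j ∈ Finset.range (p+1), x j * n j = a i * n i) :
    ((∀ j, j < i → x j = 0) ∧ ∑ j ∈ Finset.range (p+1), x j ≤ a i) ∨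
    ((∀ j, i ≤ j → x j = 0) ∧ b i ≤ ∑ j ∈ Finset.range (p+1), x j) := by
  have hnN : ∀ j, j ≤ p → n j = Ng a b p j := fun j hj => hn j hj
  have hx' : ∑ j ∈ Finset.range (p+1), x j * Ng a b p j = a i * Ng a b p i := by
    rw [← hnN i hip, ← hx]
    exact Finset.sum_congr rfl (fun j hj => by
      rw [hnN j (Nat.lt_succ_iff.mp (Finset.mem_range.mp hj))])
  rcases key p hp a b ha hab i hi1 hip x hx' with ⟨h1, h2⟩ | ⟨h1, h2⟩
  · exact Or.inl ⟨h1, h2⟩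
  · refine Or.inr ⟨fun j hj => ?_, h2⟩
    rcases le_or_gt j p with h | h
    · exact h1 j hj h
    · exact hsupp j h
end

section
/- Let S be a numerical semigroup on a compound sequence and fix i in [1,p]. The element a_i·n_i admits both a factorization supported on coordinates ≥ i of length exactly a_i (namely a_i·e_i) and a factorization supported on coordinates ≤ i−1 of length exactly b_i (namely b_i·e_{i−1}); moreover these two types of factorizations are disjointly supported, so a_i·n_i is a Betti element of S. -/
/-!
Put `A = a_i ⋯ a_p` and `B = b_1 ⋯ b_i`, so that `a_i n_i = b_i n_{i-1} = A B` and `gcd(A, B) = 1`.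
Every `n_j` with `j < i` is a multiple of `A`, every `n_j` with `j ≥ i` a multiple of `B`. Splitting
a factorization `x` of `A B` accordingly as `L + R = A B` gives `A ∣ L` and `B ∣ R`, hence `A B ∣ R`;
so either `R = 0` or `L = 0`, i.e. every factorization of `a_i n_i` is supported on the indices
`< i` or on the indices `≥ i`, and both kinds occur.
-/

open Finset

theorem Nat.eq_zero_or_eq_zero_of_add_eq_mul_of_coprime {A B L R : ℕ} (hAB : A.Coprime B)
    (hL : A ∣ L) (hR : B ∣ R) (h : L + R = A * B) : L = 0 ∨ R = 0 := by
  have hAR : A ∣ R := (Nat.dvd_add_right hL).mp (h ▸ dvd_mul_right A B)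
  rcases Nat.eq_zero_or_pos R with hR0 | hRpos
  · exact Or.inr hR0
  · have := Nat.le_of_dvd hRpos (hAB.mul_dvd_of_dvd_of_dvd hAR hR)
    exact Or.inl (by omega)

theorem Finset.mul_eq_zero_on_or_off_of_sum_eq_mul_of_coprime {ι : Type*} (s : Finset ι)
    (P : ι → Prop) [DecidablePred P] (x n : ι → ℕ) {A B : ℕ} (hAB : A.Coprime B)
    (hA : ∀ j ∈ s, P j → A ∣ n j) (hB : ∀ j ∈ s, ¬P j → B ∣ n j)
    (hsum : ∑ j ∈ s, x j * n j = A * B) :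
    (∀ j ∈ s, P j → x j * n j = 0) ∨ (∀ j ∈ s, ¬P j → x j * n j = 0) := by
  have hL : A ∣ ∑ j ∈ s with P j, x j * n j :=
    dvd_sum fun j hj => (hA j (mem_filter.1 hj).1 (mem_filter.1 hj).2).mul_left _
  have hR : B ∣ ∑ j ∈ s with ¬P j, x j * n j :=
    dvd_sum fun j hj => (hB j (mem_filter.1 hj).1 (mem_filter.1 hj).2).mul_left _
  rw [← sum_filter_add_sum_filter_not s P] at hsum
  refine (Nat.eq_zero_or_eq_zero_of_add_eq_mul_of_coprime hAB hL hR hsum).imp ?_ ?_ <;>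
  · intro h j hj hP
    exact sum_eq_zero_iff.1 h j (mem_filter.2 ⟨hj, hP⟩)

theorem Finset.sum_range_ite_eq_mul {k m : ℕ} (hk : k < m) (c : ℕ) (f : ℕ → ℕ) :
    ∑ j ∈ range m, (if j = k then c else 0) * f j = c * f k := by
  simp [ite_mul, mem_range.2 hk]

theorem Finset.sum_range_ite_eq {k m : ℕ} (hk : k < m) (c : ℕ) :
    ∑ j ∈ range m, (if j = k then c else 0) = c := by
  simp [mem_range.2 hk]

namespace CompoundSequence

variable {p : ℕ} {a b n : ℕ → ℕ}
  (hn : ∀ i, i ≤ p → n i = (∏ j ∈ Icc 1 i, b j) * ∏ j ∈ Icc (i + 1) p, a j)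
include hn

theorem a_mul_n_eq {i : ℕ} (hip : i ≤ p) :
    a i * n i = (∏ j ∈ Icc 1 i, b j) * ∏ j ∈ Icc i p, a j := by
  rw [hn i hip, ← mul_prod_Ioc_eq_prod_Icc hip, ← Icc_add_one_left_eq_Ioc]
  ring

theorem b_mul_n_pred_eq {i : ℕ} (hi1 : 1 ≤ i) (hip : i ≤ p) :
    b i * n (i - 1) = (∏ j ∈ Icc 1 i, b j) * ∏ j ∈ Icc i p, a j := by
  obtain ⟨k, rfl⟩ : ∃ k, i = k + 1 := ⟨i - 1, by omega⟩
  rw [Nat.add_sub_cancel, hn k (by omega), prod_Icc_succ_top (by omega)]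
  ring

theorem n_pos (ha : ∀ i, 1 ≤ i → i ≤ p → 2 ≤ a i ∧ a i < b i) {j : ℕ} (hj : j ≤ p) :
    0 < n j := by
  rw [hn j hj]
  refine Nat.mul_pos (prod_pos fun k hk => ?_) (prod_pos fun k hk => ?_) <;>
  · rw [mem_Icc] at hk
    have := ha k (by omega) (by omega)
    omega

theorem prod_a_dvd_n {i j : ℕ} (hji : j < i) (hip : i ≤ p) : ∏ k ∈ Icc i p, a k ∣ n j := by
  rw [hn j (by omega)]
  exact (prod_dvd_prod_of_subset _ _ _ (Icc_subset_Icc (by omega) le_rfl)).mul_left _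

theorem prod_b_dvd_n {i j : ℕ} (hij : i ≤ j) (hjp : j ≤ p) : ∏ k ∈ Icc 1 i, b k ∣ n j := by
  rw [hn j hjp]
  exact (prod_dvd_prod_of_subset _ _ _ (Icc_subset_Icc le_rfl hij)).mul_right _

omit hn in
theorem coprime_prod_a_prod_b (hab : ∀ i j, 1 ≤ j → j ≤ i → i ≤ p → Nat.gcd (a i) (b j) = 1)
    (i : ℕ) : Nat.Coprime (∏ k ∈ Icc i p, a k) (∏ j ∈ Icc 1 i, b j) :=
  Nat.Coprime.prod_left fun k hk => Nat.Coprime.prod_right fun j hj => by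
    rw [mem_Icc] at hk hj
    exact hab k j hj.1 (hj.2.trans hk.1) hk.2

theorem eq_zero_below_or_eq_zero_above
    (ha : ∀ i, 1 ≤ i → i ≤ p → 2 ≤ a i ∧ a i < b i)
    (hab : ∀ i j, 1 ≤ j → j ≤ i → i ≤ p → Nat.gcd (a i) (b j) = 1)
    {i : ℕ} (hip : i ≤ p) {x : ℕ → ℕ} (hx0 : ∀ j, p < j → x j = 0)
    (hx : ∑ j ∈ range (p + 1), x j * n j = a i * n i) :
    (∀ j < i, x j = 0) ∨ (∀ j, i ≤ j → x j = 0) := by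
  rw [a_mul_n_eq hn hip, mul_comm] at hx
  have key := mul_eq_zero_on_or_off_of_sum_eq_mul_of_coprime _ (· < i) x n
    (coprime_prod_a_prod_b hab i)
    (fun j _ hji => prod_a_dvd_n hn hji hip)
    (fun j hj hij => prod_b_dvd_n hn (not_lt.1 hij) (Nat.lt_succ_iff.1 (mem_range.1 hj))) hx
  have hcancel : ∀ j, j ≤ p → x j * n j = 0 → x j = 0 := fun j hj h =>
    (mul_eq_zero.1 h).resolve_right (n_pos hn ha hj).ne'
  refine key.imp (fun h j hji => ?_) (fun h j hij => ?_)
  · exact hcancel j (by omega) (h j (mem_range.2 (by omega)) hji)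
  · rcases Nat.lt_or_ge p j with hpj | hjp
    · exact hx0 j hpj
    · exact hcancel j hjp (h j (mem_range.2 (by omega)) (not_lt.2 hij))

end CompoundSequence

open CompoundSequence in
theorem stmt9_general (p : ℕ) (a b : ℕ → ℕ)
    (ha : ∀ i, 1 ≤ i → i ≤ p → 2 ≤ a i ∧ a i < b i)
    (hab : ∀ i j, 1 ≤ j → j ≤ i → i ≤ p → Nat.gcd (a i) (b j) = 1)
    (n : ℕ → ℕ)
    (hn : ∀ i, i ≤ p → n i = (∏ j ∈ Finset.Icc 1 i, b j) * ∏ j ∈ Finset.Icc (i+1) p, a j)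
    (i : ℕ) (hi1 : 1 ≤ i) (hip : i ≤ p) :
    (∑ j ∈ Finset.range (p+1), (if j = i then a i else 0) * n j = a i * n i) ∧
    (∑ j ∈ Finset.range (p+1), (if j = i then a i else 0) = a i) ∧
    (∑ j ∈ Finset.range (p+1), (if j = i - 1 then b i else 0) * n j = a i * n i) ∧
    (∑ j ∈ Finset.range (p+1), (if j = i - 1 then b i else 0) = b i) ∧
    (∃ X Y : Set (ℕ → ℕ),
      X ∪ Y = {x : ℕ → ℕ | (∀ j, p < j → x j = 0) ∧
          ∑ j ∈ Finset.range (p+1), x j * n j = a i * n i} ∧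
      Disjoint X Y ∧ X.Nonempty ∧ Y.Nonempty ∧
      ∀ x ∈ X, ∀ y ∈ Y, ∀ j, x j * y j = 0) := by
  have hi : i < p + 1 := by omega
  have hi' : i - 1 < p + 1 := by omega
  have h1 := sum_range_ite_eq_mul hi (a i) n
  have h3 : ∑ j ∈ range (p + 1), (if j = i - 1 then b i else 0) * n j = a i * n i := by
    rw [sum_range_ite_eq_mul hi', b_mul_n_pred_eq hn hi1 hip, a_mul_n_eq hn hip]
  refine ⟨h1, sum_range_ite_eq hi _, h3, sum_range_ite_eq hi' _, ?_⟩
  set F : Set (ℕ → ℕ) := {x | (∀ j, p < j → x j = 0) ∧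
    ∑ j ∈ range (p + 1), x j * n j = a i * n i}
  refine ⟨{x ∈ F | ∀ j < i, x j = 0}, {x ∈ F | ∀ j, i ≤ j → x j = 0}, ?_, ?_, ?_, ?_, ?_⟩
  · ext x
    refine ⟨fun hx => hx.elim (·.1) (·.1), fun hx => ?_⟩
    exact (eq_zero_below_or_eq_zero_above hn ha hab hip hx.1 hx.2).imp (⟨hx, ·⟩) (⟨hx, ·⟩)
  · refine Set.disjoint_left.2 fun x ⟨⟨_, hx⟩, hlt⟩ ⟨_, hge⟩ => ?_
    have hx0 : x = 0 := funext fun j => (lt_or_ge j i).elim (hlt j) (hge j)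
    have : 0 < a i * n i := Nat.mul_pos (by linarith [ha i hi1 hip]) (n_pos hn ha hip)
    simp only [hx0, Pi.zero_apply, zero_mul, sum_const_zero] at hx
    omega
  · exact ⟨fun j => if j = i then a i else 0,
      ⟨fun j hj => if_neg (by omega), h1⟩, fun j hj => if_neg (by omega)⟩
  · exact ⟨fun j => if j = i - 1 then b i else 0,
      ⟨fun j hj => if_neg (by omega), h3⟩, fun j hj => if_neg (by omega)⟩
  · rintro x ⟨-, hlt⟩ y ⟨-, hge⟩ j
    rcases lt_or_ge j i with h | h
    · rw [hlt j h, zero_mul]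
    · rw [hge j h, mul_zero]

theorem stmt9 (p : ℕ) (hp : 1 ≤ p) (a b : ℕ → ℕ)
    (ha : ∀ i, 1 ≤ i → i ≤ p → 2 ≤ a i ∧ a i < b i)
    (hab : ∀ i j, 1 ≤ j → j ≤ i → i ≤ p → Nat.gcd (a i) (b j) = 1)
    (n : ℕ → ℕ)
    (hn : ∀ i, i ≤ p → n i = (∏ j ∈ Finset.Icc 1 i, b j) * ∏ j ∈ Finset.Icc (i+1) p, a j)
    (i : ℕ) (hi1 : 1 ≤ i) (hip : i ≤ p) :
    (∑ j ∈ Finset.range (p+1), (if j = i then a i else 0) * n j = a i * n i) ∧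
    (∑ j ∈ Finset.range (p+1), (if j = i then a i else 0) = a i) ∧
    (∑ j ∈ Finset.range (p+1), (if j = i - 1 then b i else 0) * n j = a i * n i) ∧
    (∑ j ∈ Finset.range (p+1), (if j = i - 1 then b i else 0) = b i) ∧
    (∃ X Y : Set (ℕ → ℕ),
      X ∪ Y = {x : ℕ → ℕ | (∀ j, p < j → x j = 0) ∧
          ∑ j ∈ Finset.range (p+1), x j * n j = a i * n i} ∧
      Disjoint X Y ∧ X.Nonempty ∧ Y.Nonempty ∧
      ∀ x ∈ X, ∀ y ∈ Y, ∀ j, x j * y j = 0) :=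
  stmt9_general p a b ha hab n hn i hi1 hip
end

section
/- Let S be a numerical semigroup on a compound sequence, n ∈ S, and let x, y ∈ ℕ^{p+1} be two factorizations of n. If m is the smallest index where x + y is nonzero, then x_m ≡ y_m (mod b_{m+1}); if m' is the largest index where x + y is nonzero, then x_{m'} ≡ y_{m'} (mod a_{m'}). -/
lemma prodIccSplit (f : ℕ → ℕ) {s m j : ℕ} (h1 : s ≤ m + 1) (h2 : m ≤ j) :
    ∏ k ∈ Finset.Icc s j, f k
      = (∏ k ∈ Finset.Icc s m, f k) * ∏ k ∈ Finset.Icc (m+1) j, f k := by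
  rw [← Finset.prod_union (by
    simp only [Finset.disjoint_left, Finset.mem_Icc]
    omega)]
  congr 1
  ext k
  simp only [Finset.mem_Icc, Finset.mem_union]
  omega


theorem stmt10 (p : ℕ) (hp : 1 ≤ p) (a b : ℕ → ℕ)
    (ha : ∀ i, 1 ≤ i → i ≤ p → 2 ≤ a i ∧ a i < b i)
    (hab : ∀ i j, 1 ≤ j → j ≤ i → i ≤ p → Nat.gcd (a i) (b j) = 1)
    (n : ℕ → ℕ)
    (hn : ∀ i, i ≤ p → n i = (∏ j ∈ Finset.Icc 1 i, b j) * ∏ j ∈ Finset.Icc (i+1) p, a j)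
    (x y : ℕ → ℕ) (hxs : ∀ j, p < j → x j = 0) (hys : ∀ j, p < j → y j = 0)
    (hxy : ∑ j ∈ Finset.range (p+1), x j * n j = ∑ j ∈ Finset.range (p+1), y j * n j) :
    (∀ m, x m + y m ≠ 0 → (∀ j, j < m → x j + y j = 0) →
        x m ≡ y m [MOD b (m+1)]) ∧
    (∀ m, x m + y m ≠ 0 → (∀ j, m < j → x j + y j = 0) →
        x m ≡ y m [MOD a m]) := by
  constructor
  · -- first claim
    intro m hm hlt
    have hmp : m ≤ p := by
      by_contra h
      push_neg at h
      exact hm (by rw [hxs m h, hys m h])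
    set B := ∏ j ∈ Finset.Icc 1 m, b j with hB
    set c : ℕ → ℕ := fun j => (∏ k ∈ Finset.Icc (m+1) j, b k) * ∏ k ∈ Finset.Icc (j+1) p, a k
      with hc
    have hBpos : 0 < B := by
      apply Finset.prod_pos
      intro j hj
      obtain ⟨h1, h2⟩ := Finset.mem_Icc.mp hj
      have := ha j h1 (h2.trans hmp)
      omega
    have hkey : ∀ z : ℕ → ℕ, (∀ j, j < m → z j = 0) →
        ∑ j ∈ Finset.range (p+1), z j * n j = B * ∑ j ∈ Finset.range (p+1), z j * c j := by
      intro z hz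
      rw [Finset.mul_sum]
      apply Finset.sum_congr rfl
      intro j hj
      rcases lt_or_ge j m with h | h
      · simp [hz j h]
      · have hjp : j ≤ p := Nat.lt_succ_iff.mp (Finset.mem_range.mp hj)
        rw [hn j hjp, hc]
        have hsplit : ∏ k ∈ Finset.Icc 1 j, b k
            = B * ∏ k ∈ Finset.Icc (m+1) j, b k := by
          rw [hB]; exact prodIccSplit b (by omega) h
        rw [hsplit]; ring
    have hsum := (hkey x (fun j hj => by have := hlt j hj; omega)).symm.trans
      ((hkey y (fun j hj => by have := hlt j hj; omega)).symm ▸ hxy)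
    have hSxy : ∑ j ∈ Finset.range (p+1), x j * c j = ∑ j ∈ Finset.range (p+1), y j * c j :=
      Nat.eq_of_mul_eq_mul_left hBpos (by rw [← hkey x (fun j hj => by have := hlt j hj; omega),
        ← hkey y (fun j hj => by have := hlt j hj; omega)]; exact hxy)
    have hmem : m ∈ Finset.range (p+1) := Finset.mem_range.mpr (by omega)
    have hmod : ∀ z : ℕ → ℕ, (∀ j, j < m → z j = 0) →
        (∑ j ∈ Finset.range (p+1), z j * c j) ≡ z m * c m [MOD b (m+1)] := by
      intro z hz
      rw [← Finset.sum_erase_add _ _ hmem]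
      have hdvd : (b (m+1)) ∣ ∑ j ∈ (Finset.range (p+1)).erase m, z j * c j := by
        apply Finset.dvd_sum
        intro j hj
        obtain ⟨hne, hjr⟩ := Finset.mem_erase.mp hj
        rcases lt_or_ge j m with h | h
        · simp [hz j h]
        · have hmj : m + 1 ≤ j := by omega
          have hd : b (m+1) ∣ ∏ k ∈ Finset.Icc (m+1) j, b k :=
            Finset.dvd_prod_of_mem _ (Finset.mem_Icc.mpr ⟨le_refl _, hmj⟩)
          exact Dvd.dvd.mul_left (hd.mul_right _) _
      have := (Nat.modEq_zero_iff_dvd.mpr hdvd).add_right (z m * c m)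
      simpa using this
    have hcc : x m * c m ≡ y m * c m [MOD b (m+1)] :=
      ((hmod x (fun j hj => by have := hlt j hj; omega)).symm.trans
        (hSxy ▸ hmod y (fun j hj => by have := hlt j hj; omega)))
    have hcop : Nat.Coprime (c m) (b (m+1)) := by
      rw [hc]
      apply Nat.Coprime.mul
      · apply Nat.Coprime.prod_left
        intro k hk
        obtain ⟨h1, h2⟩ := Finset.mem_Icc.mp hk
        omega
      · apply Nat.Coprime.prod_left
        intro k hk
        obtain ⟨h1, h2⟩ := Finset.mem_Icc.mp hk
        exact hab k (m+1) (by omega) h1 h2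
    exact Nat.ModEq.cancel_right_of_coprime hcop.symm hcc
  · -- second claim
    intro m hm hgt
    have hmp : m ≤ p := by
      by_contra h
      push_neg at h
      exact hm (by rw [hxs m h, hys m h])
    set A := ∏ k ∈ Finset.Icc (m+1) p, a k with hA
    set d : ℕ → ℕ := fun j => (∏ k ∈ Finset.Icc 1 j, b k) * ∏ k ∈ Finset.Icc (j+1) m, a k
      with hd
    have hApos : 0 < A := by
      apply Finset.prod_pos
      intro j hj
      obtain ⟨h1, h2⟩ := Finset.mem_Icc.mp hj
      have := ha j (by omega) h2
      omega
    have hkey : ∀ z : ℕ → ℕ, (∀ j, m < j → z j = 0) →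
        ∑ j ∈ Finset.range (p+1), z j * n j = (∑ j ∈ Finset.range (p+1), z j * d j) * A := by
      intro z hz
      rw [Finset.sum_mul]
      apply Finset.sum_congr rfl
      intro j hj
      rcases lt_or_ge m j with h | h
      · simp [hz j h]
      · have hjp : j ≤ p := le_trans h hmp
        rw [hn j hjp, hd]
        have hsplit : ∏ k ∈ Finset.Icc (j+1) p, a k
            = (∏ k ∈ Finset.Icc (j+1) m, a k) * A := by
          rw [hA]; exact prodIccSplit a (by omega) hmp
        rw [hsplit]; ring
    have hSxy : ∑ j ∈ Finset.range (p+1), x j * d j = ∑ j ∈ Finset.range (p+1), y j * d j :=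
      Nat.eq_of_mul_eq_mul_right hApos (by rw [← hkey x (fun j hj => by have := hgt j hj; omega),
        ← hkey y (fun j hj => by have := hgt j hj; omega)]; exact hxy)
    have hmem : m ∈ Finset.range (p+1) := Finset.mem_range.mpr (by omega)
    have hmod : ∀ z : ℕ → ℕ, (∀ j, m < j → z j = 0) →
        (∑ j ∈ Finset.range (p+1), z j * d j) ≡ z m * d m [MOD a m] := by
      intro z hz
      rw [← Finset.sum_erase_add _ _ hmem]
      have hdvd : (a m) ∣ ∑ j ∈ (Finset.range (p+1)).erase m, z j * d j := by
        apply Finset.dvd_sum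
        intro j hj
        obtain ⟨hne, hjr⟩ := Finset.mem_erase.mp hj
        rcases lt_or_ge m j with h | h
        · simp [hz j h]
        · have hjm : j + 1 ≤ m := by omega
          have hda : a m ∣ ∏ k ∈ Finset.Icc (j+1) m, a k :=
            Finset.dvd_prod_of_mem _ (Finset.mem_Icc.mpr ⟨hjm, le_refl _⟩)
          exact Dvd.dvd.mul_left (hda.mul_left _) _
      have := (Nat.modEq_zero_iff_dvd.mpr hdvd).add_right (z m * d m)
      simpa using this
    have hcc : x m * d m ≡ y m * d m [MOD a m] :=
      ((hmod x (fun j hj => by have := hgt j hj; omega)).symm.trans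
        (hSxy ▸ hmod y (fun j hj => by have := hgt j hj; omega)))
    have hcop : Nat.Coprime (d m) (a m) := by
      rw [hd]
      apply Nat.Coprime.mul
      · apply Nat.Coprime.prod_left
        intro k hk
        obtain ⟨h1, h2⟩ := Finset.mem_Icc.mp hk
        exact Nat.coprime_comm.mp (hab m k h1 h2 hmp)
      · apply Nat.Coprime.prod_left
        intro k hk
        obtain ⟨h1, h2⟩ := Finset.mem_Icc.mp hk
        omega
    exact Nat.ModEq.cancel_right_of_coprime hcop.symm hcc
end

section
/- Let S be a numerical semigroup on a compound sequence. For each i in [1,p], the relation (a_i e_i, b_i e_{i-1}) is irreducible in the kernel congruence σ: there is no relation (α e_i, β e_{i-1}) ∈ σ with 0 < α < a_i. -/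
theorem stmt11 (p : ℕ) (hp : 1 ≤ p) (a b : ℕ → ℕ)
    (ha : ∀ i, 1 ≤ i → i ≤ p → 2 ≤ a i ∧ a i < b i)
    (hab : ∀ i j, 1 ≤ j → j ≤ i → i ≤ p → Nat.gcd (a i) (b j) = 1)
    (n : ℕ → ℕ)
    (hn : ∀ i, i ≤ p → n i = (∏ j ∈ Finset.Icc 1 i, b j) * ∏ j ∈ Finset.Icc (i+1) p, a j)
    (i : ℕ) (hi1 : 1 ≤ i) (hip : i ≤ p)
    (α β : ℕ) (hα0 : 0 < α) (hαa : α < a i) :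
    α * n i ≠ β * n (i - 1) := by
  intro h
  have hni : n i = (∏ j ∈ Finset.Icc 1 i, b j) * ∏ j ∈ Finset.Icc (i+1) p, a j :=
    hn i hip
  have hni1 : n (i-1) = (∏ j ∈ Finset.Icc 1 (i-1), b j) * ∏ j ∈ Finset.Icc i p, a j := by
    have := hn (i-1) (le_trans (Nat.sub_le i 1) hip)
    rwa [Nat.sub_add_cancel hi1] at this
  -- split products
  have hsplitb : ∏ j ∈ Finset.Icc 1 i, b j = (∏ j ∈ Finset.Icc 1 (i-1), b j) * b i := by
    have h1 : ∏ j ∈ Finset.Icc 1 ((i-1)+1), b j = (∏ j ∈ Finset.Icc 1 (i-1), b j) * b ((i-1)+1) :=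
      Finset.prod_Icc_succ_top (by omega) _
    rw [Nat.sub_add_cancel hi1] at h1
    exact h1
  have hsplita : ∏ j ∈ Finset.Icc i p, a j = a i * ∏ j ∈ Finset.Icc (i+1) p, a j := by
    rw [show Finset.Icc i p = insert i (Finset.Icc (i+1) p) by
      ext x; simp [Finset.mem_Icc]; omega,
      Finset.prod_insert (by simp)]
  -- key equation: a i * n i = b i * n (i-1)
  have hkey : a i * n i = b i * n (i-1) := by
    rw [hni, hni1, hsplitb, hsplita]; ring
  -- positivity of n (i-1)
  have hpos : 0 < n (i-1) := by
    rw [hni1]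
    apply Nat.mul_pos <;> apply Finset.prod_pos <;> intro j hj <;>
      simp only [Finset.mem_Icc] at hj
    · have := ha j hj.1 (le_trans hj.2 (le_trans (Nat.sub_le i 1) hip))
      omega
    · have := ha j (le_trans hi1 hj.1) hj.2
      omega
  -- from h: α * b i = β * a i
  have h2 : (α * b i) * n (i-1) = (β * a i) * n (i-1) := by
    calc (α * b i) * n (i-1) = α * (b i * n (i-1)) := by ring
    _ = α * (a i * n i) := by rw [hkey]
    _ = a i * (α * n i) := by ring
    _ = a i * (β * n (i-1)) := by rw [h]
    _ = (β * a i) * n (i-1) := by ring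
  have h3 : α * b i = β * a i := Nat.eq_of_mul_eq_mul_right hpos h2
  have hcop : Nat.Coprime (a i) (b i) := hab i i hi1 le_rfl hip
  have hdvd : a i ∣ α := by
    have : a i ∣ α * b i := ⟨β, by rw [h3]; ring⟩
    exact (Nat.Coprime.dvd_of_dvd_mul_right hcop this)
  have := Nat.le_of_dvd hα0 hdvd
  omega
end

section
/- Let S be a numerical semigroup on a compound sequence, n ∈ S, and x, y two factorizations of n. Then there is a chain of factorizations x = x^0, x^1, ..., x^k = y of n such that each consecutive pair differs by a basic swap, i.e., x^{j+1} is obtained from x^j by replacing a_i copies of n_i with b_i copies of n_{i-1} or vice versa, for some i. -/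
/-!
Fix the index `t` below which two factorizations `x`, `y` of the same element already agree.
With respect to the compound sequence `a_{t+1}, …, a_p; b_{t+1}, …, b_p`, the generator `n_t`
is coprime to `b_{t+1}`, and `b_{t+1}` divides every later generator. Comparing the two
factorizations modulo `b_{t+1}` therefore gives `x_t ≡ y_t`, say `x_t = y_t + q b_{t+1}`, and `q`
basic swaps at index `t + 1` turn `x` into a factorization agreeing with `y` up to index `t`.
Induction on `t` finishes the argument.
-/

open Finset Relation

lemma Nat.exists_eq_add_mul_of_mul_add_mul_eq {A B x y S T : ℕ} (hcop : Nat.Coprime A B)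
    (hB : 0 < B) (hle : y ≤ x) (h : x * A + B * S = y * A + B * T) :
    ∃ q, x = y + q * B ∧ T = S + q * A := by
  obtain ⟨d, rfl⟩ := Nat.exists_eq_add_of_le hle
  have hd : d * A + B * S = B * T := Nat.add_left_cancel (n := y * A) (by rw [← h]; ring)
  have hBd : B ∣ d := hcop.symm.dvd_of_dvd_mul_right <|
    (Nat.dvd_add_left (dvd_mul_right B S)).mp (hd ▸ dvd_mul_right B T)
  obtain ⟨q, rfl⟩ := hBd
  refine ⟨q, by ring, ?_⟩
  have hq : B * (q * A + S) = B * T := by rw [← hd]; ring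
  linarith [Nat.eq_of_mul_eq_mul_left hB hq]

namespace CompoundSequence

variable (p : ℕ) (a b : ℕ → ℕ)

def BasicSwap (u v : ℕ → ℕ) : Prop :=
  ∃ i, 1 ≤ i ∧ i ≤ p ∧
    ((fun j => u j + if j = i - 1 then b i else 0) =
      (fun j => v j + if j = i then a i else 0) ∨
     (fun j => u j + if j = i then a i else 0) =
      (fun j => v j + if j = i - 1 then b i else 0))

instance : Std.Symm (BasicSwap p a b) where
  symm _ _ := fun ⟨i, hi1, hip, h⟩ => ⟨i, hi1, hip, h.symm.imp Eq.symm Eq.symm⟩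

/-- The generator `n_j` of the compound sequence `a_{t+1}, …, a_p; b_{t+1}, …, b_p`. -/
def weight (t j : ℕ) : ℕ :=
  (∏ k ∈ Icc (t + 1) j, b k) * ∏ k ∈ Icc (j + 1) p, a k

def weightedSum (t : ℕ) (z : ℕ → ℕ) : ℕ :=
  ∑ j ∈ Icc t p, z j * weight p a b t j

variable {p a b}

lemma basicSwap_add_single {i : ℕ} (hi1 : 1 ≤ i) (hip : i ≤ p) (w : ℕ → ℕ) :
    BasicSwap p a b (w + Pi.single (i - 1) (b i)) (w + Pi.single i (a i)) := by
  refine ⟨i, hi1, hip, Or.inr ?_⟩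
  funext j
  simp only [Pi.add_apply, Pi.single_apply]
  split_ifs <;> omega

lemma reflTransGen_basicSwap_add_single_mul {i : ℕ} (hi1 : 1 ≤ i) (hip : i ≤ p)
    (w : ℕ → ℕ) (q : ℕ) :
    ReflTransGen (BasicSwap p a b)
      (w + Pi.single (i - 1) (q * b i)) (w + Pi.single i (q * a i)) := by
  induction q generalizing w with
  | zero => simpa using ReflTransGen.refl
  | succ q ih =>
    have hstart : w + Pi.single (i - 1) ((q + 1) * b i)
        = (w + Pi.single (i - 1) (b i)) + Pi.single (i - 1) (q * b i) := by
      rw [add_mul, one_mul, Pi.single_add]; abel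
    have hmid : (w + Pi.single (i - 1) (b i)) + Pi.single i (q * a i)
        = (w + Pi.single i (q * a i)) + Pi.single (i - 1) (b i) := by abel
    have hend : (w + Pi.single i (q * a i)) + Pi.single i (a i)
        = w + Pi.single i ((q + 1) * a i) := by
      rw [add_mul, one_mul, Pi.single_add, add_assoc]
    rw [hstart, ← hend]
    exact (ih _).tail (hmid ▸ basicSwap_add_single hi1 hip _)

lemma weight_self_self : weight p a b p p = 1 := by
  simp [weight]

lemma weight_of_lt {t j : ℕ} (htj : t < j) :
    weight p a b t j = b (t + 1) * weight p a b (t + 1) j := by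
  rw [weight, weight, ← insert_Icc_add_one_left_eq_Icc htj, prod_insert (by simp), mul_assoc]

lemma weight_self {t : ℕ} (ht : t < p) :
    weight p a b t t = a (t + 1) * weight p a b (t + 1) (t + 1) := by
  simp [weight, ← insert_Icc_add_one_left_eq_Icc (Nat.succ_le_of_lt ht)]

lemma coprime_weight_self {t : ℕ} (hab : ∀ k ∈ Icc (t + 1) p, Nat.Coprime (a k) (b (t + 1))) :
    Nat.Coprime (weight p a b t t) (b (t + 1)) := by
  simpa [weight] using Nat.Coprime.prod_left hab

lemma weightedSum_self (z : ℕ → ℕ) : weightedSum p a b p z = z p := by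
  simp [weightedSum, weight_self_self]

lemma weightedSum_eq {t : ℕ} (ht : t < p) (z : ℕ → ℕ) :
    weightedSum p a b t z
      = z t * weight p a b t t + b (t + 1) * weightedSum p a b (t + 1) z := by
  rw [weightedSum, ← insert_Icc_add_one_left_eq_Icc ht.le, sum_insert (by simp), weightedSum,
    mul_sum]
  congr 1
  refine sum_congr rfl fun j hj => ?_
  rw [weight_of_lt (by simp at hj; omega)]
  ring

lemma weightedSum_add (t : ℕ) (z z' : ℕ → ℕ) :
    weightedSum p a b t (z + z') = weightedSum p a b t z + weightedSum p a b t z' := by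
  simp [weightedSum, add_mul, sum_add_distrib]

lemma weightedSum_single {t k : ℕ} (htk : t ≤ k) (hkp : k ≤ p) (c : ℕ) :
    weightedSum p a b t (Pi.single k c) = c * weight p a b t k := by
  simp [weightedSum, Pi.single_apply, htk, hkp]

lemma weightedSum_update_of_lt {t k : ℕ} (hkt : k < t) (z : ℕ → ℕ) (c : ℕ) :
    weightedSum p a b t (Function.update z k c) = weightedSum p a b t z := by
  refine sum_congr rfl fun j hj => ?_
  rw [Function.update_of_ne (by simp at hj; omega)]

lemma exists_reflTransGen_basicSwap_eq_at {t : ℕ} (ht : t < p) (hb : 0 < b (t + 1))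
    (hab : ∀ k ∈ Icc (t + 1) p, Nat.Coprime (a k) (b (t + 1))) {x y : ℕ → ℕ} (hle : y t ≤ x t)
    (h : weightedSum p a b t x = weightedSum p a b t y) :
    ∃ x', ReflTransGen (BasicSwap p a b) x x' ∧ x' t = y t ∧
      (∀ j, j ≠ t → j ≠ t + 1 → x' j = x j) ∧
      weightedSum p a b (t + 1) x' = weightedSum p a b (t + 1) y := by
  have hcop := coprime_weight_self hab
  rw [weightedSum_eq ht, weightedSum_eq ht] at h
  rw [weight_self ht] at h hcop
  obtain ⟨q, hxq, hSy⟩ := Nat.exists_eq_add_mul_of_mul_add_mul_eq hcop hb hle h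
  set w := Function.update x t (y t)
  have hx : w + Pi.single (t + 1 - 1) (q * b (t + 1)) = x := by
    funext j
    rcases eq_or_ne j t with rfl | hj
    · simp [w]; omega
    · simp [w, hj]
  have hchain := reflTransGen_basicSwap_add_single_mul (a := a) (b := b) (i := t + 1)
    (Nat.le_add_left 1 t) ht w q
  rw [hx] at hchain
  refine ⟨_, hchain, by simp [w], fun j hj hj' => by simp [w, hj, hj'], ?_⟩
  rw [weightedSum_add, weightedSum_single le_rfl ht, weightedSum_update_of_lt (Nat.lt_succ_self t),
    hSy]
  ring

theorem reflTransGen_basicSwap_of_weightedSum_eq (hb : ∀ i, 1 ≤ i → i ≤ p → 0 < b i)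
    (hab : ∀ i j, 1 ≤ j → j ≤ i → i ≤ p → Nat.Coprime (a i) (b j)) {t : ℕ} (ht : t ≤ p)
    (x y : ℕ → ℕ) (hout : ∀ j ∉ Icc t p, x j = y j)
    (h : weightedSum p a b t x = weightedSum p a b t y) :
    ReflTransGen (BasicSwap p a b) x y := by
  induction ht using Nat.decreasingInduction generalizing x y with
  | self =>
    rw [weightedSum_self, weightedSum_self] at h
    have hxy : x = y := by
      funext j
      by_cases hj : j = p
      · rwa [hj]
      · exact hout j (by simp; omega)
    rw [hxy]
  | of_succ t ht ih =>
    wlog hle : y t ≤ x t generalizing x y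
    · exact Std.Symm.symm _ _ (this y x (fun j hj => (hout j hj).symm) h.symm (by omega))
    obtain ⟨x', hxx', hx't, hx'x, h'⟩ := exists_reflTransGen_basicSwap_eq_at ht
      (hb _ (by omega) ht) (fun k hk => hab k _ (by omega) (mem_Icc.mp hk).1 (mem_Icc.mp hk).2)
      hle h
    refine hxx'.trans (ih x' y (fun j hj => ?_) h')
    by_cases hjt : j = t
    · rwa [hjt]
    · simp only [mem_Icc, not_and_or, not_le] at hj
      rw [hx'x j hjt (by omega), hout j (by simp; omega)]

end CompoundSequence

theorem stmt12_general (p : ℕ) (a b : ℕ → ℕ)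
    (ha : ∀ i, 1 ≤ i → i ≤ p → 2 ≤ a i ∧ a i < b i)
    (hab : ∀ i j, 1 ≤ j → j ≤ i → i ≤ p → Nat.gcd (a i) (b j) = 1)
    (n : ℕ → ℕ)
    (hn : ∀ i, i ≤ p → n i = (∏ j ∈ Finset.Icc 1 i, b j) * ∏ j ∈ Finset.Icc (i+1) p, a j)
    (x y : ℕ → ℕ) (hxs : ∀ j, p < j → x j = 0) (hys : ∀ j, p < j → y j = 0)
    (hxy : ∑ j ∈ Finset.range (p+1), x j * n j = ∑ j ∈ Finset.range (p+1), y j * n j) :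
    Relation.ReflTransGen (fun u v : ℕ → ℕ => ∃ i, 1 ≤ i ∧ i ≤ p ∧
      ((fun j => u j + if j = i - 1 then b i else 0) =
        (fun j => v j + if j = i then a i else 0) ∨
       (fun j => u j + if j = i then a i else 0) =
        (fun j => v j + if j = i - 1 then b i else 0))) x y := by
  have hweightedSum (z : ℕ → ℕ) :
      CompoundSequence.weightedSum p a b 0 z = ∑ j ∈ Finset.range (p + 1), z j * n j := by
    rw [CompoundSequence.weightedSum, range_eq_Ico, Ico_add_one_right_eq_Icc]
    exact sum_congr rfl fun j hj => by rw [hn j (mem_Icc.mp hj).2]; rfl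
  exact CompoundSequence.reflTransGen_basicSwap_of_weightedSum_eq
    (fun i hi1 hip => by have := ha i hi1 hip; omega) hab (Nat.zero_le p) x y
    (fun j hj => by simp at hj; rw [hxs j hj, hys j hj])
    (by rw [hweightedSum, hweightedSum, hxy])

theorem stmt12 (p : ℕ) (hp : 1 ≤ p) (a b : ℕ → ℕ)
    (ha : ∀ i, 1 ≤ i → i ≤ p → 2 ≤ a i ∧ a i < b i)
    (hab : ∀ i j, 1 ≤ j → j ≤ i → i ≤ p → Nat.gcd (a i) (b j) = 1)
    (n : ℕ → ℕ)
    (hn : ∀ i, i ≤ p → n i = (∏ j ∈ Finset.Icc 1 i, b j) * ∏ j ∈ Finset.Icc (i+1) p, a j)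
    (x y : ℕ → ℕ) (hxs : ∀ j, p < j → x j = 0) (hys : ∀ j, p < j → y j = 0)
    (hxy : ∑ j ∈ Finset.range (p+1), x j * n j = ∑ j ∈ Finset.range (p+1), y j * n j) :
    Relation.ReflTransGen (fun u v : ℕ → ℕ => ∃ i, 1 ≤ i ∧ i ≤ p ∧
      ((fun j => u j + if j = i - 1 then b i else 0) =
        (fun j => v j + if j = i then a i else 0) ∨
       (fun j => u j + if j = i then a i else 0) =
        (fun j => v j + if j = i - 1 then b i else 0))) x y :=
  stmt12_general p a b ha hab n hn x y hxs hys hxy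
end

section
/- Let S be a numerical semigroup on a compound sequence, n ∈ S, and i ∈ [0,p]. Then there is exactly one factorization x of n that is i-normal, i.e., satisfying 0 ≤ x_j < b_{j+1} for all j < i and 0 ≤ x_j < a_j for all j > i. -/
/-!
Put `B_j = b_1 ⋯ b_j` and `A_j = a_j ⋯ a_p`, so that `n_j = B_j A_{j+1}` and consecutive
generators satisfy `b_{j+1} n_j = a_{j+1} n_{j+1}`. Existence is a mixed-radix carry: starting from
any factorization, replace `a_j n_j` by `b_j n_{j-1}` as often as possible for `j = p, …, i + 1`,
then `b_{j+1} n_j` by `a_{j+1} n_{j+1}` for `j = 0, …, i - 1`. Uniqueness: `A_j` divides `n_k` for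
`k < j`, whereas `n_j = B_j A_{j+1}` with `gcd(a_j, B_j) = 1`; so if two factorizations agree above
some `j > i`, reducing modulo `A_j` shows that their `j`-th coordinates agree modulo `a_j`.
Symmetrically `B_{j+1}` determines the coordinates `j < i` from below, and then the `i`-th
coordinate is forced.
-/

open Finset

theorem sum_eq_of_eq_off_pair {α M : Type*} [DecidableEq α] [AddCommMonoid M] {s : Finset α}
    {f g : α → M} {u v : α} (hu : u ∈ s) (hv : v ∈ s) (huv : u ≠ v)
    (hfg : ∀ k, k ≠ u → k ≠ v → f k = g k) (h : f u + f v = g u + g v) :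
    ∑ k ∈ s, f k = ∑ k ∈ s, g k := by
  have hv' : v ∈ s.erase u := mem_erase.2 ⟨huv.symm, hv⟩
  rw [← add_sum_erase s f hu, ← add_sum_erase _ f hv', ← add_sum_erase s g hu,
    ← add_sum_erase _ g hv', ← add_assoc, ← add_assoc, h]
  congr 1
  refine sum_congr rfl fun k hk => ?_
  obtain ⟨hkv, hk⟩ := mem_erase.1 hk
  exact hfg k (mem_erase.1 hk).1 hkv

theorem eq_of_sum_mul_eq {s : Finset ℕ} {x y g : ℕ → ℕ} {j m c e : ℕ} (hj : j ∈ s)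
    (hsum : ∑ k ∈ s, x k * g k = ∑ k ∈ s, y k * g k)
    (hother : ∀ k ∈ s, k ≠ j → x k = y k ∨ m * e ∣ g k)
    (hgj : g j = c * e) (he : 0 < e) (hmc : Nat.Coprime m c) (hx : x j < m) (hy : y j < m) :
    x j = y j := by
  have hdiff : ∑ k ∈ s, ((y k : ℤ) - x k) * g k = 0 := by
    simp only [sub_mul, sum_sub_distrib, sub_eq_zero]
    exact_mod_cast hsum.symm
  rw [← add_sum_erase s _ hj] at hdiff
  have hrest : ((m * e : ℕ) : ℤ) ∣ ∑ k ∈ s.erase j, ((y k : ℤ) - x k) * g k := by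
    refine dvd_sum fun k hk => ?_
    rcases hother k (mem_erase.1 hk).2 (mem_erase.1 hk).1 with h | h
    · simp [h]
    · exact (Int.natCast_dvd_natCast.2 h).mul_left _
  have hdvd := (dvd_add_left hrest).1 (hdiff ▸ dvd_zero _)
  rw [hgj, Nat.cast_mul, Nat.cast_mul, ← mul_assoc,
    mul_dvd_mul_iff_right (by exact_mod_cast he.ne')] at hdvd
  exact (Nat.modEq_iff_dvd.2 <|
    (Nat.isCoprime_iff_coprime.2 hmc).dvd_of_dvd_mul_right hdvd).eq_of_lt_of_lt hx hy

namespace CompoundSequence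

def prefixProd (b : ℕ → ℕ) (j : ℕ) : ℕ := ∏ k ∈ Icc 1 j, b k

def suffixProd (a : ℕ → ℕ) (p j : ℕ) : ℕ := ∏ k ∈ Icc j p, a k

def IsFactorization (n : ℕ → ℕ) (p N : ℕ) (x : ℕ → ℕ) : Prop :=
  (∀ j, p < j → x j = 0) ∧ ∑ j ∈ range (p + 1), x j * n j = N

def IsNormal (a b : ℕ → ℕ) (p i : ℕ) (x : ℕ → ℕ) : Prop :=
  (∀ j, j < i → x j < b (j + 1)) ∧ (∀ j, i < j → j ≤ p → x j < a j)

variable {p N : ℕ} {a b n x y : ℕ → ℕ}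

theorem prefixProd_succ (b : ℕ → ℕ) (j : ℕ) : prefixProd b (j + 1) = prefixProd b j * b (j + 1) :=
  prod_Icc_succ_top (by omega) b

theorem suffixProd_eq_mul {j : ℕ} (hj : j ≤ p) : suffixProd a p j = a j * suffixProd a p (j + 1) := by
  rw [suffixProd, ← insert_Icc_add_one_left_eq_Icc hj, prod_insert (by simp)]
  rfl

theorem prefixProd_pos (hb : ∀ k, 1 ≤ k → k ≤ p → 0 < b k) {j : ℕ} (hj : j ≤ p) :
    0 < prefixProd b j :=
  prod_pos fun k hk => hb k (mem_Icc.1 hk).1 ((mem_Icc.1 hk).2.trans hj)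

theorem suffixProd_pos (ha : ∀ k, 1 ≤ k → k ≤ p → 0 < a k) {j : ℕ} (hj : 1 ≤ j) :
    0 < suffixProd a p j :=
  prod_pos fun k hk => ha k (hj.trans (mem_Icc.1 hk).1) (mem_Icc.1 hk).2

theorem coprime_prefixProd (hab : ∀ i j, 1 ≤ j → j ≤ i → i ≤ p → Nat.gcd (a i) (b j) = 1)
    {j : ℕ} (hj : j ≤ p) : Nat.Coprime (a j) (prefixProd b j) :=
  Nat.Coprime.prod_right fun k hk => hab j k (mem_Icc.1 hk).1 (mem_Icc.1 hk).2 hj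

theorem coprime_suffixProd (hab : ∀ i j, 1 ≤ j → j ≤ i → i ≤ p → Nat.gcd (a i) (b j) = 1)
    (j : ℕ) : Nat.Coprime (b (j + 1)) (suffixProd a p (j + 1)) :=
  Nat.Coprime.prod_right fun k hk =>
    Nat.Coprime.symm (hab k (j + 1) (by omega) (mem_Icc.1 hk).1 (mem_Icc.1 hk).2)

theorem trade (hn : ∀ j, j ≤ p → n j = prefixProd b j * suffixProd a p (j + 1))
    {j : ℕ} (hj : j < p) : b (j + 1) * n j = a (j + 1) * n (j + 1) := by
  rw [hn j hj.le, hn (j + 1) hj, suffixProd_eq_mul hj, prefixProd_succ]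
  ring

theorem suffixProd_dvd (hn : ∀ j, j ≤ p → n j = prefixProd b j * suffixProd a p (j + 1))
    {j k : ℕ} (hkj : k < j) (hk : k ≤ p) : suffixProd a p j ∣ n k := by
  rw [hn k hk]
  exact (prod_dvd_prod_of_subset _ _ a (Icc_subset_Icc (by omega) le_rfl)).mul_left _

theorem prefixProd_dvd (hn : ∀ j, j ≤ p → n j = prefixProd b j * suffixProd a p (j + 1))
    {j k : ℕ} (hjk : j < k) (hk : k ≤ p) : prefixProd b (j + 1) ∣ n k := by
  rw [hn k hk]
  exact (prod_dvd_prod_of_subset _ _ b (Icc_subset_Icc le_rfl (by omega))).mul_right _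

theorem IsFactorization.carry (hx : IsFactorization n p N x) {u v c d : ℕ} (hu : u ≤ p)
    (hv : v ≤ p) (huv : u ≠ v) (htrade : c * n u = d * n v) :
    IsFactorization n p N
      (Function.update (Function.update x u (x u % c)) v (x v + d * (x u / c))) := by
  refine ⟨fun k hk => ?_, ?_⟩
  · simpa [Function.update_of_ne (show k ≠ u by omega), Function.update_of_ne (show k ≠ v by omega)]
      using hx.1 k hk
  · rw [← hx.2]
    refine sum_eq_of_eq_off_pair (mem_range.2 (by omega)) (mem_range.2 (by omega)) huv
      (fun k hku hkv => by simp [Function.update_of_ne, hku, hkv]) ?_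
    simp only [Function.update_self, Function.update_of_ne huv]
    calc x u % c * n u + (x v + d * (x u / c)) * n v
        = x u % c * n u + x v * n v + x u / c * (d * n v) := by ring
      _ = (x u % c + c * (x u / c)) * n u + x v * n v := by rw [← htrade]; ring
      _ = x u * n u + x v * n v := by rw [Nat.mod_add_div]

theorem exists_normal_below (hn : ∀ j, j ≤ p → n j = prefixProd b j * suffixProd a p (j + 1))
    (hb : ∀ k, 1 ≤ k → k ≤ p → 0 < b k) (hx : IsFactorization n p N x) {i : ℕ} (hi : i ≤ p) :
    ∃ y, IsFactorization n p N y ∧ (∀ j, j < i → y j < b (j + 1)) ∧ ∀ j, i < j → y j = x j := by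
  induction i with
  | zero => exact ⟨x, hx, by simp, fun _ _ => rfl⟩
  | succ i ih =>
    obtain ⟨y, hy, hlow, hhigh⟩ := ih (by omega)
    refine ⟨_, hy.carry (u := i) (v := i + 1) (by omega) hi (by omega) (trade hn hi),
      fun j hj => ?_, fun j hj => ?_⟩
    · rcases (show j < i ∨ j = i by omega) with hj | rfl
      · simpa [Function.update_of_ne, hj.ne, (show j ≠ i + 1 by omega)] using hlow j hj
      · simpa using Nat.mod_lt _ (hb _ (by omega) hi)
    · simpa [Function.update_of_ne, (show j ≠ i by omega), hj.ne'] using hhigh j (by omega)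

theorem exists_normal_above (hn : ∀ j, j ≤ p → n j = prefixProd b j * suffixProd a p (j + 1))
    (ha : ∀ k, 1 ≤ k → k ≤ p → 0 < a k) (hx : IsFactorization n p N x) {i : ℕ} (hi : i ≤ p) :
    ∃ y, IsFactorization n p N y ∧ ∀ j, i < j → j ≤ p → y j < a j := by
  induction hi using Nat.decreasingInduction with
  | self => exact ⟨x, hx, fun j h1 h2 => by omega⟩
  | of_succ i hi ih =>
    obtain ⟨y, hy, hhigh⟩ := ih
    refine ⟨_, hy.carry (u := i + 1) (v := i) hi (by omega) (by omega) (trade hn hi).symm,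
      fun j hj hjp => ?_⟩
    rcases (show j = i + 1 ∨ i + 1 < j by omega) with rfl | hj
    · simpa [Function.update_of_ne] using Nat.mod_lt _ (ha _ (by omega) hjp)
    · simpa [Function.update_of_ne, hj.ne', (show j ≠ i by omega)] using hhigh j hj hjp

theorem exists_isNormal (hn : ∀ j, j ≤ p → n j = prefixProd b j * suffixProd a p (j + 1))
    (ha : ∀ k, 1 ≤ k → k ≤ p → 0 < a k) (hb : ∀ k, 1 ≤ k → k ≤ p → 0 < b k)
    (hx : IsFactorization n p N x) {i : ℕ} (hi : i ≤ p) :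
    ∃ z, IsFactorization n p N z ∧ IsNormal a b p i z := by
  obtain ⟨y, hy, hhigh⟩ := exists_normal_above hn ha hx hi
  obtain ⟨z, hz, hlow, hzy⟩ := exists_normal_below hn hb hy hi
  exact ⟨z, hz, hlow, fun j hij hjp => hzy j hij ▸ hhigh j hij hjp⟩

theorem eq_of_lt_of_isNormal (hn : ∀ j, j ≤ p → n j = prefixProd b j * suffixProd a p (j + 1))
    (hb : ∀ k, 1 ≤ k → k ≤ p → 0 < b k)
    (hab : ∀ i j, 1 ≤ j → j ≤ i → i ≤ p → Nat.gcd (a i) (b j) = 1)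
    (hx : IsFactorization n p N x) (hy : IsFactorization n p N y) {i : ℕ} (hi : i ≤ p)
    (hxi : IsNormal a b p i x) (hyi : IsNormal a b p i y) {j : ℕ} (hj : j < i) : x j = y j := by
  induction j using Nat.strong_induction_on with
  | _ j ih =>
    refine eq_of_sum_mul_eq (mem_range.2 (by omega)) (hx.2.trans hy.2.symm) (fun k hk hkj => ?_)
      (by rw [hn j (by omega), mul_comm]) (prefixProd_pos hb (by omega)) (coprime_suffixProd hab j)
      (hxi.1 j hj) (hyi.1 j hj)
    rcases lt_or_gt_of_ne hkj with hkj | hkj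
    · exact .inl (ih k hkj (by omega))
    · rw [mul_comm, ← prefixProd_succ]
      exact .inr (prefixProd_dvd hn hkj (Nat.lt_succ_iff.1 (mem_range.1 hk)))

theorem eq_of_gt_of_isNormal (hn : ∀ j, j ≤ p → n j = prefixProd b j * suffixProd a p (j + 1))
    (ha : ∀ k, 1 ≤ k → k ≤ p → 0 < a k)
    (hab : ∀ i j, 1 ≤ j → j ≤ i → i ≤ p → Nat.gcd (a i) (b j) = 1)
    (hx : IsFactorization n p N x) (hy : IsFactorization n p N y) {i : ℕ}
    (hxi : IsNormal a b p i x) (hyi : IsNormal a b p i y) {j : ℕ} (hj : i < j) : x j = y j := by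
  suffices ∀ d l, i < l → p < l + d → x l = y l from this (p + 1) j hj (by omega)
  intro d
  induction d with
  | zero => exact fun l _ hl => (hx.1 l hl).trans (hy.1 l hl).symm
  | succ d ih =>
    intro l hil hld
    by_cases hlp : p < l
    · exact (hx.1 l hlp).trans (hy.1 l hlp).symm
    refine eq_of_sum_mul_eq (mem_range.2 (by omega)) (hx.2.trans hy.2.symm) (fun k hk hkl => ?_)
      (hn l (by omega)) (suffixProd_pos ha (by omega)) (coprime_prefixProd hab (by omega))
      (hxi.2 l hil (by omega)) (hyi.2 l hil (by omega))
    rcases lt_or_gt_of_ne hkl with hkl | hkl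
    · rw [← suffixProd_eq_mul (by omega)]
      exact .inr (suffixProd_dvd hn hkl (Nat.lt_succ_iff.1 (mem_range.1 hk)))
    · exact .inl (ih k (by omega) (by omega))

theorem eq_of_isNormal (hn : ∀ j, j ≤ p → n j = prefixProd b j * suffixProd a p (j + 1))
    (ha : ∀ k, 1 ≤ k → k ≤ p → 0 < a k) (hb : ∀ k, 1 ≤ k → k ≤ p → 0 < b k)
    (hab : ∀ i j, 1 ≤ j → j ≤ i → i ≤ p → Nat.gcd (a i) (b j) = 1)
    (hx : IsFactorization n p N x) (hy : IsFactorization n p N y) {i : ℕ} (hi : i ≤ p)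
    (hxi : IsNormal a b p i x) (hyi : IsNormal a b p i y) : x = y := by
  have hne : ∀ k, k ≠ i → x k = y k := fun k hk => (lt_or_gt_of_ne hk).elim
    (eq_of_lt_of_isNormal hn hb hab hx hy hi hxi hyi) (eq_of_gt_of_isNormal hn ha hab hx hy hxi hyi)
  have hmid : x i * n i = y i * n i := by
    have hsum := hx.2.trans hy.2.symm
    rw [← add_sum_erase _ _ (mem_range.2 (Nat.lt_succ_of_le hi)),
      ← add_sum_erase _ _ (mem_range.2 (Nat.lt_succ_of_le hi)),
      sum_congr rfl fun k hk => by rw [hne k (mem_erase.1 hk).1]] at hsum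
    exact Nat.add_right_cancel hsum
  have hni : 0 < n i := hn i hi ▸ Nat.mul_pos (prefixProd_pos hb hi) (suffixProd_pos ha (by omega))
  funext k
  by_cases hk : k = i
  · exact hk ▸ Nat.eq_of_mul_eq_mul_right hni hmid
  · exact hne k hk

end CompoundSequence

open CompoundSequence in
theorem stmt13_general (p : ℕ) (a b : ℕ → ℕ)
    (ha : ∀ i, 1 ≤ i → i ≤ p → 2 ≤ a i ∧ a i < b i)
    (hab : ∀ i j, 1 ≤ j → j ≤ i → i ≤ p → Nat.gcd (a i) (b j) = 1)
    (n : ℕ → ℕ)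
    (hn : ∀ i, i ≤ p → n i = (∏ j ∈ Finset.Icc 1 i, b j) * ∏ j ∈ Finset.Icc (i+1) p, a j)
    (N : ℕ) (hN : ∃ x : ℕ → ℕ, (∀ j, p < j → x j = 0) ∧
        ∑ j ∈ Finset.range (p+1), x j * n j = N)
    (i : ℕ) (hip : i ≤ p) :
    ∃! x : ℕ → ℕ, (∀ j, p < j → x j = 0) ∧
      (∑ j ∈ Finset.range (p+1), x j * n j = N) ∧
      (∀ j, j < i → x j < b (j+1)) ∧
      (∀ j, i < j → j ≤ p → x j < a j) := by
  have hapos : ∀ k, 1 ≤ k → k ≤ p → 0 < a k := fun k h1 h2 => by have := ha k h1 h2; omega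
  have hbpos : ∀ k, 1 ≤ k → k ≤ p → 0 < b k := fun k h1 h2 => by have := ha k h1 h2; omega
  obtain ⟨x, hx⟩ := hN
  obtain ⟨z, hz, hzi⟩ := exists_isNormal hn hapos hbpos hx hip
  refine ⟨z, ⟨hz.1, hz.2, hzi⟩, fun y ⟨hys, hyN, hyi⟩ => ?_⟩
  exact eq_of_isNormal hn hapos hbpos hab ⟨hys, hyN⟩ hz hip hyi hzi

theorem stmt13 (p : ℕ) (hp : 1 ≤ p) (a b : ℕ → ℕ)
    (ha : ∀ i, 1 ≤ i → i ≤ p → 2 ≤ a i ∧ a i < b i)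
    (hab : ∀ i j, 1 ≤ j → j ≤ i → i ≤ p → Nat.gcd (a i) (b j) = 1)
    (n : ℕ → ℕ)
    (hn : ∀ i, i ≤ p → n i = (∏ j ∈ Finset.Icc 1 i, b j) * ∏ j ∈ Finset.Icc (i+1) p, a j)
    (N : ℕ) (hN : ∃ x : ℕ → ℕ, (∀ j, p < j → x j = 0) ∧
        ∑ j ∈ Finset.range (p+1), x j * n j = N)
    (i : ℕ) (hip : i ≤ p) :
    ∃! x : ℕ → ℕ, (∀ j, p < j → x j = 0) ∧
      (∑ j ∈ Finset.range (p+1), x j * n j = N) ∧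
      (∀ j, j < i → x j < b (j+1)) ∧
      (∀ j, i < j → j ≤ p → x j < a j) :=
  stmt13_general p a b ha hab n hn N hN i hip
end

section
/- Let S be a numerical semigroup on a compound sequence, n ∈ S, i ∈ [0,p], and let x be the i-normal factorization of n. Then for every factorization y of n, x_i ≥ y_i. -/
/-! Since `b_{j+1} n_j = a_{j+1} n_{j+1}`, trading `b_{j+1}` copies of `n_j` for `a_{j+1}` copies
of `n_{j+1}` (or back) preserves the value. Trading towards the index `i` never lowers the `i`-th
coordinate and strictly lowers the potential `∑ y_m ∏_{i < k ≤ m} b_k` (as `a_k < b_k` and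
`2 ≤ a_k`), so any factorization `y` leads to an `i`-normal one `z` with `y_i ≤ z_i`. The
`i`-normal factorization is unique: the value modulo `a_u`, which is coprime to `b_{l+1} ⋯ b_u`,
fixes the top coordinate when `i < u`, and modulo `b_{l+1}`, coprime to `a_{l+1} ⋯ a_u`, the
bottom one when `l < i`. Hence `z_i = x_i`. -/

open Finset

section Trade

variable {y : ℕ → ℕ} {j k c d : ℕ}

def trade (y : ℕ → ℕ) (j k c d : ℕ) : ℕ → ℕ :=
  fun m => if m = j then y j - c else if m = k then y k + d else y m

lemma le_trade_apply {m : ℕ} (hm : m ≠ j) : y m ≤ trade y j k c d m := by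
  unfold trade
  split_ifs <;> subst_vars <;> omega

lemma sum_trade_mul_add {s : Finset ℕ} (hj : j ∈ s) (hk : k ∈ s) (hjk : j ≠ k) (hc : c ≤ y j)
    (f : ℕ → ℕ) :
    ∑ m ∈ s, trade y j k c d m * f m + c * f j = ∑ m ∈ s, y m * f m + d * f k := by
  have hpt : ∀ m,
      trade y j k c d m + (if m = j then c else 0) = y m + (if m = k then d else 0) := by
    intro m
    unfold trade
    split_ifs <;> subst_vars <;> omega
  have := Finset.sum_congr rfl fun m (_ : m ∈ s) => congrArg (· * f m) (hpt m)
  simpa only [add_mul, sum_add_distrib, ite_mul, zero_mul, sum_ite_eq', hj, hk, if_true]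
    using this

end Trade

def IsNormal (a b : ℕ → ℕ) (p i : ℕ) (x : ℕ → ℕ) : Prop :=
  (∀ j < i, x j < b (j + 1)) ∧ ∀ j, i < j → j ≤ p → x j < a j

lemma IsNormal.mono {a b x : ℕ → ℕ} {p q i : ℕ} (hx : IsNormal a b p i x) (hqp : q ≤ p) :
    IsNormal a b q i x :=
  ⟨hx.1, fun j hij hjq => hx.2 j hij (hjq.trans hqp)⟩

section Normalization

variable {a b n y w : ℕ → ℕ} {p i j k c d : ℕ}

lemma sum_trade_lt (hj : j ≤ p) (hk : k ≤ p) (hjk : j ≠ k) (hc : c ≤ y j)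
    (hcd : c * n j = d * n k) (hw : d * w k < c * w j) :
    ∑ m ∈ range (p + 1), trade y j k c d m * n m = ∑ m ∈ range (p + 1), y m * n m ∧
      ∑ m ∈ range (p + 1), trade y j k c d m * w m < ∑ m ∈ range (p + 1), y m * w m := by
  have hj' : j ∈ range (p + 1) := mem_range.2 (by omega)
  have hk' : k ∈ range (p + 1) := mem_range.2 (by omega)
  have hn := sum_trade_mul_add (d := d) hj' hk' hjk hc n
  have hw' := sum_trade_mul_add (d := d) hj' hk' hjk hc w
  constructor <;> omega

lemma exists_trade_of_not_isNormal (ha : ∀ k, 1 ≤ k → k ≤ p → 2 ≤ a k ∧ a k < b k)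
    (hn : ∀ j < p, b (j + 1) * n j = a (j + 1) * n (j + 1)) (hip : i ≤ p)
    (hy : ¬ IsNormal a b p i y) :
    ∃ y' : ℕ → ℕ, ∑ m ∈ range (p + 1), y' m * n m = ∑ m ∈ range (p + 1), y m * n m ∧
      ∑ m ∈ range (p + 1), y' m * ∏ k ∈ Ioc i m, b k
        < ∑ m ∈ range (p + 1), y m * ∏ k ∈ Ioc i m, b k ∧ y i ≤ y' i := by
  simp only [IsNormal, not_and_or, not_forall, not_lt] at hy
  rcases hy with ⟨j, hji, hbj⟩ | ⟨j, hij, hjp, haj⟩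
  · have hw : ∀ m ≤ i, ∏ k ∈ Ioc i m, b k = 1 := fun m hm => by
      rw [Ioc_eq_empty_of_le hm, prod_empty]
    refine ⟨trade y j (j + 1) (b (j + 1)) (a (j + 1)), ?_⟩
    obtain ⟨hS, hΦ⟩ := sum_trade_lt (p := p) (by omega) (by omega) (by omega) hbj
      (hn j (by omega)) (w := fun m => ∏ k ∈ Ioc i m, b k) (by
        rw [hw j hji.le, hw (j + 1) hji, mul_one, mul_one]
        exact (ha (j + 1) (by omega) (by omega)).2)
    exact ⟨hS, hΦ, le_trade_apply hji.ne'⟩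
  · obtain ⟨k, rfl⟩ : ∃ k, j = k + 1 := ⟨j - 1, by omega⟩
    have hwk : 0 < ∏ m ∈ Ioc i k, b m := prod_pos fun m hm => by
      obtain ⟨him, hmk⟩ := mem_Ioc.1 hm
      have := ha m (by omega) (by omega)
      omega
    have ha2 := (ha (k + 1) (by omega) hjp).1
    have hb := (ha (k + 1) (by omega) hjp).2
    refine ⟨trade y (k + 1) k (a (k + 1)) (b (k + 1)), ?_⟩
    obtain ⟨hS, hΦ⟩ := sum_trade_lt (p := p) hjp (by omega) (by omega) haj
      (hn k (by omega)).symm (w := fun m => ∏ k ∈ Ioc i m, b k) (by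
        rw [prod_Ioc_succ_top (by omega), mul_comm (b (k + 1))]
        exact lt_mul_of_one_lt_left (Nat.mul_pos hwk (by omega)) (by omega))
    exact ⟨hS, hΦ, le_trade_apply hij.ne⟩

lemma exists_isNormal_le (ha : ∀ k, 1 ≤ k → k ≤ p → 2 ≤ a k ∧ a k < b k)
    (hn : ∀ j < p, b (j + 1) * n j = a (j + 1) * n (j + 1)) (hip : i ≤ p) (y : ℕ → ℕ) :
    ∃ z, IsNormal a b p i z ∧
      ∑ m ∈ range (p + 1), z m * n m = ∑ m ∈ range (p + 1), y m * n m ∧ y i ≤ z i := by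
  induction h : ∑ m ∈ range (p + 1), y m * ∏ k ∈ Ioc i m, b k using Nat.strong_induction_on
    generalizing y with
  | _ Φ ih =>
    by_cases hy : IsNormal a b p i y
    · exact ⟨y, hy, rfl, le_rfl⟩
    obtain ⟨y', hSy', hΦy', hiy'⟩ := exists_trade_of_not_isNormal ha hn hip hy
    obtain ⟨z, hz, hSz, hiz⟩ := ih _ (h ▸ hΦy') y' rfl
    exact ⟨z, hz, hSz.trans hSy', hiy'.trans hiz⟩

end Normalization

lemma eq_and_eq_of_add_mul_eq {m c x y A B : ℕ} (hc : m.Coprime c) (hx : x < m) (hy : y < m)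
    (hA : m ∣ A) (hB : m ∣ B) (h : A + x * c = B + y * c) : A = B ∧ x = y := by
  have hAB : A ≡ B [MOD m] :=
    (Nat.modEq_zero_iff_dvd.2 hA).trans (Nat.modEq_zero_iff_dvd.2 hB).symm
  have hxy : x = y :=
    ((hAB.add_left_cancel (h ▸ Nat.ModEq.refl _)).cancel_right_of_coprime hc).eq_of_lt_of_lt hx hy
  subst hxy
  exact ⟨by omega, rfl⟩

-- `compoundGen a b 0 p j` is the paper's `n_j`; other `l`, `u` give the generators of the
-- compound sequence `(a_k, b_k)_{l < k ≤ u}`.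
def compoundGen (a b : ℕ → ℕ) (l u j : ℕ) : ℕ :=
  (∏ k ∈ Ioc l j, b k) * ∏ k ∈ Ioc j u, a k

section CompoundGen

variable {a b : ℕ → ℕ} {l u v j : ℕ}

lemma compoundGen_succ_top (hj : j ≤ v) :
    compoundGen a b l (v + 1) j = compoundGen a b l v j * a (v + 1) := by
  rw [compoundGen, compoundGen, prod_Ioc_succ_top hj, mul_assoc]

lemma compoundGen_of_lt (hlj : l < j) :
    compoundGen a b l u j = b (l + 1) * compoundGen a b (l + 1) u j := by
  rw [compoundGen, compoundGen, ← insert_Ioc_add_one_left_eq_Ioc hlj,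
    prod_insert (by simp), mul_assoc]

lemma b_mul_compoundGen (hlj : l ≤ j) (hju : j < u) :
    b (j + 1) * compoundGen a b l u j = a (j + 1) * compoundGen a b l u (j + 1) := by
  rw [compoundGen, compoundGen, prod_Ioc_succ_top hlj, ← insert_Ioc_add_one_left_eq_Ioc hju,
    prod_insert (by simp)]
  ring

lemma sum_compoundGen_succ_top (hlv : l ≤ v + 1) (z : ℕ → ℕ) :
    ∑ j ∈ Icc l (v + 1), z j * compoundGen a b l (v + 1) j
      = (∑ j ∈ Icc l v, z j * compoundGen a b l v j) * a (v + 1)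
        + z (v + 1) * ∏ k ∈ Ioc l (v + 1), b k := by
  rw [sum_Icc_succ_top hlv, sum_mul]
  congr 1
  · refine sum_congr rfl fun j hj => ?_
    rw [compoundGen_succ_top (mem_Icc.1 hj).2, mul_assoc]
  · simp [compoundGen]

lemma sum_compoundGen_eq_bot (hlu : l ≤ u) (z : ℕ → ℕ) :
    ∑ j ∈ Icc l u, z j * compoundGen a b l u j
      = b (l + 1) * ∑ j ∈ Icc (l + 1) u, z j * compoundGen a b (l + 1) u j
        + z l * ∏ k ∈ Ioc l u, a k := by
  rw [← insert_Icc_add_one_left_eq_Icc hlu, sum_insert (by simp), add_comm, mul_sum]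
  congr 1
  · refine sum_congr rfl fun j hj => ?_
    rw [compoundGen_of_lt (by simp only [mem_Icc] at hj; omega)]
    ring
  · simp [compoundGen]

end CompoundGen

theorem IsNormal.apply_eq {a b x y : ℕ → ℕ} {l u i : ℕ}
    (hcop : ∀ k j, l < j → j ≤ k → k ≤ u → (a k).Coprime (b j)) (hli : l ≤ i) (hiu : i ≤ u)
    (hx : IsNormal a b u i x) (hy : IsNormal a b u i y)
    (h : ∑ j ∈ Icc l u, x j * compoundGen a b l u j = ∑ j ∈ Icc l u, y j * compoundGen a b l u j) :
    x i = y i := by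
  rcases hiu.lt_or_eq with hiu | rfl
  · obtain ⟨v, rfl⟩ : ∃ v, u = v + 1 := ⟨u - 1, by omega⟩
    have hxu := hx.2 (v + 1) hiu le_rfl
    rw [sum_compoundGen_succ_top (by omega), sum_compoundGen_succ_top (by omega)] at h
    obtain ⟨h, -⟩ := eq_and_eq_of_add_mul_eq
      (Nat.Coprime.prod_right fun k hk => hcop _ _ (mem_Ioc.1 hk).1 (mem_Ioc.1 hk).2 le_rfl)
      hxu (hy.2 (v + 1) hiu le_rfl) (dvd_mul_left _ _) (dvd_mul_left _ _) h
    exact IsNormal.apply_eq (fun k j h₁ h₂ h₃ => hcop k j h₁ h₂ (by omega)) hli (by omega)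
      (hx.mono (by omega)) (hy.mono (by omega)) (Nat.eq_of_mul_eq_mul_right (by omega) h)
  · rcases hli.lt_or_eq with hli | rfl
    · have hxl := hx.1 l hli
      rw [sum_compoundGen_eq_bot hli.le, sum_compoundGen_eq_bot hli.le] at h
      obtain ⟨h, -⟩ := eq_and_eq_of_add_mul_eq
        (Nat.Coprime.prod_right fun k hk =>
          (hcop _ _ (by omega) (mem_Ioc.1 hk).1 (mem_Ioc.1 hk).2).symm)
        hxl (hy.1 l hli) (dvd_mul_right _ _) (dvd_mul_right _ _) h
      exact IsNormal.apply_eq (fun k j h₁ => hcop k j (by omega)) (by omega) le_rfl hx hy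
        (Nat.eq_of_mul_eq_mul_left (by omega) h)
    · simpa [compoundGen] using h
termination_by u - l

theorem stmt14_general (p : ℕ) (a b : ℕ → ℕ)
    (ha : ∀ i, 1 ≤ i → i ≤ p → 2 ≤ a i ∧ a i < b i)
    (hab : ∀ i j, 1 ≤ j → j ≤ i → i ≤ p → Nat.gcd (a i) (b j) = 1)
    (n : ℕ → ℕ)
    (hn : ∀ i, i ≤ p → n i = (∏ j ∈ Finset.Icc 1 i, b j) * ∏ j ∈ Finset.Icc (i+1) p, a j)
    (N : ℕ) (i : ℕ) (hip : i ≤ p)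
    (x : ℕ → ℕ)
    (hx : ∑ j ∈ Finset.range (p+1), x j * n j = N)
    (hxb : ∀ j, j < i → x j < b (j+1))
    (hxa : ∀ j, i < j → j ≤ p → x j < a j)
    (y : ℕ → ℕ)
    (hy : ∑ j ∈ Finset.range (p+1), y j * n j = N) :
    y i ≤ x i := by
  have hn' : ∀ j ≤ p, n j = compoundGen a b 0 p j := fun j hj => by
    rw [hn j hj, compoundGen, ← Icc_add_one_left_eq_Ioc, ← Icc_add_one_left_eq_Ioc, zero_add]
  have hsum : ∀ z : ℕ → ℕ, ∑ j ∈ range (p + 1), z j * n j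
      = ∑ j ∈ Icc 0 p, z j * compoundGen a b 0 p j := fun z => by
    rw [range_eq_Ico, Ico_add_one_right_eq_Icc]
    exact sum_congr rfl fun j hj => by rw [hn' j (mem_Icc.1 hj).2]
  have htrade : ∀ j < p, b (j + 1) * n j = a (j + 1) * n (j + 1) := fun j hj => by
    rw [hn' j hj.le, hn' (j + 1) hj]
    exact b_mul_compoundGen (Nat.zero_le j) hj
  obtain ⟨z, hz, hzy, hyz⟩ := exists_isNormal_le ha htrade hip y
  have hxz : x i = z i := IsNormal.apply_eq hab (Nat.zero_le i) hip
    ⟨hxb, hxa⟩ hz (by rw [← hsum, ← hsum, hx, hzy, hy])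
  omega

theorem stmt14 (p : ℕ) (hp : 1 ≤ p) (a b : ℕ → ℕ)
    (ha : ∀ i, 1 ≤ i → i ≤ p → 2 ≤ a i ∧ a i < b i)
    (hab : ∀ i j, 1 ≤ j → j ≤ i → i ≤ p → Nat.gcd (a i) (b j) = 1)
    (n : ℕ → ℕ)
    (hn : ∀ i, i ≤ p → n i = (∏ j ∈ Finset.Icc 1 i, b j) * ∏ j ∈ Finset.Icc (i+1) p, a j)
    (N : ℕ) (i : ℕ) (hip : i ≤ p)
    (x : ℕ → ℕ) (hxs : ∀ j, p < j → x j = 0)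
    (hx : ∑ j ∈ Finset.range (p+1), x j * n j = N)
    (hxb : ∀ j, j < i → x j < b (j+1))
    (hxa : ∀ j, i < j → j ≤ p → x j < a j)
    (y : ℕ → ℕ) (hys : ∀ j, p < j → y j = 0)
    (hy : ∑ j ∈ Finset.range (p+1), y j * n j = N) :
    y i ≤ x i :=
  stmt14_general p a b ha hab n hn N i hip x hx hxb hxa y hy
end

section
/- Let S be a numerical semigroup on a compound sequence and n ∈ S. The minimum factorization length of n equals the length of the p-normal factorization of n, and the maximum factorization length equals the length of the 0-normal factorization of n. -/
open Finset

private lemma icc_bot_split (lo hi : ℕ) (h : lo ≤ hi) (f : ℕ → ℕ) :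
    ∏ j ∈ Icc lo hi, f j = f lo * ∏ j ∈ Icc (lo+1) hi, f j := by
  have he : Icc lo hi = insert lo (Icc (lo+1) hi) := by
    ext x; simp only [mem_Icc, mem_insert]; omega
  rw [he, Finset.prod_insert (by simp only [mem_Icc]; omega)]

private lemma prod_shift_s15 (f : ℕ → ℕ) (lo hi : ℕ) :
    ∏ j ∈ Icc lo hi, f (j+1) = ∏ j ∈ Icc (lo+1) (hi+1), f j := by
  rw [← Finset.map_add_right_Icc lo hi 1, Finset.prod_map]; rfl

private lemma sum_two_split (s : Finset ℕ) (f : ℕ → ℕ) (j k : ℕ)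
    (hj : j ∈ s) (hk : k ∈ s) (hjk : j ≠ k) :
    ∑ i ∈ s, f i = f j + f k + ∑ i ∈ s \ {j, k}, f i := by
  have hsub : ({j, k} : Finset ℕ) ⊆ s := by
    intro x hx; simp only [mem_insert, mem_singleton] at hx
    rcases hx with rfl | rfl <;> assumption
  rw [← Finset.sum_sdiff hsub, Finset.sum_pair hjk]; ring

private lemma key_id (p : ℕ) (a b n : ℕ → ℕ)
    (hn : ∀ i, i ≤ p → n i = (∏ j ∈ Finset.Icc 1 i, b j) * ∏ j ∈ Finset.Icc (i+1) p, a j)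
    (j : ℕ) (hj : j < p) :
    n j * b (j+1) = n (j+1) * a (j+1) := by
  rw [hn j (le_of_lt hj), hn (j+1) (by omega),
    Finset.prod_Icc_succ_top (by omega) b, icc_bot_split (j+1) p (by omega) a]
  ring

private lemma n_pos (p : ℕ) (a b n : ℕ → ℕ)
    (ha : ∀ i, 1 ≤ i → i ≤ p → 2 ≤ a i ∧ a i < b i)
    (hn : ∀ i, i ≤ p → n i = (∏ j ∈ Finset.Icc 1 i, b j) * ∏ j ∈ Finset.Icc (i+1) p, a j)
    (i : ℕ) (hi : i ≤ p) : 0 < n i := by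
  rw [hn i hi]
  apply Nat.mul_pos <;> apply Finset.prod_pos <;> intro j hj <;>
    simp only [mem_Icc] at hj
  · have := ha j hj.1 (hj.2.trans hi); omega
  · have := ha j (by omega) hj.2; omega

private lemma unique_pn : ∀ (p : ℕ) (a b n : ℕ → ℕ),
    (∀ i, 1 ≤ i → i ≤ p → 2 ≤ a i ∧ a i < b i) →
    (∀ i j, 1 ≤ j → j ≤ i → i ≤ p → Nat.gcd (a i) (b j) = 1) →
    (∀ i, i ≤ p → n i = (∏ j ∈ Finset.Icc 1 i, b j) * ∏ j ∈ Finset.Icc (i+1) p, a j) →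
    ∀ y z : ℕ → ℕ, (∀ j, j < p → y j < b (j+1)) → (∀ j, j < p → z j < b (j+1)) →
    (∑ j ∈ Finset.range (p+1), y j * n j = ∑ j ∈ Finset.range (p+1), z j * n j) →
    ∀ j, j ≤ p → y j = z j := by
  intro p
  induction p with
  | zero =>
    intro a b n _ _ hn y z _ _ hsum j hj
    interval_cases j
    have h0 : n 0 = 1 := by rw [hn 0 le_rfl]; simp
    rw [Finset.sum_range_one, Finset.sum_range_one, h0, mul_one, mul_one] at hsum
    exact hsum
  | succ p IH =>
    intro a b n ha hab hn y z hy hz hsum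
    have hb1 : 0 < b 1 := by have := ha 1 (by omega) (by omega); omega
    -- n 0 is coprime to b 1
    have hcop : Nat.Coprime (b 1) (n 0) := by
      rw [hn 0 (by omega)]
      simp only [show Finset.Icc 1 0 = ∅ from rfl, Finset.prod_empty, one_mul]
      apply Nat.Coprime.prod_right
      intro i hi
      simp only [mem_Icc] at hi
      exact Nat.coprime_comm.mp (hab i 1 le_rfl hi.1 hi.2)
    -- b 1 divides n (j+1)
    have hdvd : ∀ j, j ≤ p → b 1 ∣ n (j+1) := by
      intro j hj
      rw [hn (j+1) (by omega)]
      exact Dvd.dvd.mul_right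
        (Finset.dvd_prod_of_mem b (by simp only [mem_Icc]; omega)) _
    rw [Finset.sum_range_succ' (fun j => y j * n j) (p+1), Finset.sum_range_succ' (fun j => z j * n j) (p+1)] at hsum
    have hT1 : b 1 ∣ ∑ i ∈ Finset.range (p+1), y (i+1) * n (i+1) :=
      Finset.dvd_sum fun i hi => Dvd.dvd.mul_left (hdvd i (by simp at hi; omega)) _
    have hT2 : b 1 ∣ ∑ i ∈ Finset.range (p+1), z (i+1) * n (i+1) :=
      Finset.dvd_sum fun i hi => Dvd.dvd.mul_left (hdvd i (by simp at hi; omega)) _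
    obtain ⟨t1, ht1⟩ := hT1
    obtain ⟨t2, ht2⟩ := hT2
    rw [ht1, ht2] at hsum
    have hmod : y 0 ≡ z 0 [MOD b 1] := by
      apply Nat.ModEq.cancel_right_of_coprime (c := n 0) hcop
      show (y 0 * n 0) % b 1 = (z 0 * n 0) % b 1
      have heq : y 0 * n 0 + b 1 * t1 = z 0 * n 0 + b 1 * t2 := by omega
      calc (y 0 * n 0) % b 1 = (y 0 * n 0 + b 1 * t1) % b 1 :=
            (Nat.add_mul_mod_self_left _ _ _).symm
        _ = (z 0 * n 0 + b 1 * t2) % b 1 := by rw [heq]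
        _ = (z 0 * n 0) % b 1 := Nat.add_mul_mod_self_left _ _ _
    have h00 : y 0 = z 0 := by
      have h1 := hy 0 (by omega)
      have h2 := hz 0 (by omega)
      have := hmod
      unfold Nat.ModEq at this
      rwa [Nat.mod_eq_of_lt h1, Nat.mod_eq_of_lt h2] at this
    -- the tails are equal
    have htail : ∑ i ∈ Finset.range (p+1), y (i+1) * n (i+1)
        = ∑ i ∈ Finset.range (p+1), z (i+1) * n (i+1) := by
      rw [ht1, ht2]; rw [h00] at hsum; omega
    -- shifted data
    set n' : ℕ → ℕ := fun i => (∏ j ∈ Finset.Icc 1 i, b (j+1)) * ∏ j ∈ Finset.Icc (i+1) p, a (j+1) with hn'def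
    have hrel : ∀ i, i ≤ p → n (i+1) = b 1 * n' i := by
      intro i hi
      rw [hn (i+1) (by omega), hn'def]
      simp only
      rw [prod_shift_s15 b 1 i, prod_shift_s15 a (i+1) p, icc_bot_split 1 (i+1) (by omega) b]
      norm_num
      ring
    have htail' : ∑ i ∈ Finset.range (p+1), y (i+1) * n' i
        = ∑ i ∈ Finset.range (p+1), z (i+1) * n' i := by
      have e1 : ∀ w : ℕ → ℕ, ∑ i ∈ Finset.range (p+1), w (i+1) * n (i+1)
          = b 1 * ∑ i ∈ Finset.range (p+1), w (i+1) * n' i := by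
        intro w
        rw [Finset.mul_sum]
        apply Finset.sum_congr rfl
        intro i hi
        simp only [Finset.mem_range] at hi
        rw [hrel i (by omega)]; ring
      have := htail
      rw [e1 y, e1 z] at this
      exact Nat.eq_of_mul_eq_mul_left hb1 this
    have hIH := IH (fun i => a (i+1)) (fun i => b (i+1)) n'
      (fun i h1 h2 => ha (i+1) (by omega) (by omega))
      (fun i j h1 h2 h3 => hab (i+1) (j+1) (by omega) (by omega) (by omega))
      (fun i hi => rfl)
      (fun j => y (j+1)) (fun j => z (j+1))
      (fun j hj => hy (j+1) (by omega))
      (fun j hj => hz (j+1) (by omega))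
      htail'
    intro j hj
    cases j with
    | zero => exact h00
    | succ j => exact hIH j (by omega)

private lemma unique_0n : ∀ (p : ℕ) (a b n : ℕ → ℕ),
    (∀ i, 1 ≤ i → i ≤ p → 2 ≤ a i ∧ a i < b i) →
    (∀ i j, 1 ≤ j → j ≤ i → i ≤ p → Nat.gcd (a i) (b j) = 1) →
    (∀ i, i ≤ p → n i = (∏ j ∈ Finset.Icc 1 i, b j) * ∏ j ∈ Finset.Icc (i+1) p, a j) →
    ∀ y z : ℕ → ℕ, (∀ j, 1 ≤ j → j ≤ p → y j < a j) → (∀ j, 1 ≤ j → j ≤ p → z j < a j) →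
    (∑ j ∈ Finset.range (p+1), y j * n j = ∑ j ∈ Finset.range (p+1), z j * n j) →
    ∀ j, j ≤ p → y j = z j := by
  intro p
  induction p with
  | zero =>
    intro a b n _ _ hn y z _ _ hsum j hj
    interval_cases j
    have h0 : n 0 = 1 := by rw [hn 0 le_rfl]; simp
    rw [Finset.sum_range_one, Finset.sum_range_one, h0, mul_one, mul_one] at hsum
    exact hsum
  | succ p IH =>
    intro a b n ha hab hn y z hy hz hsum
    have hap : 0 < a (p+1) := by have := ha (p+1) (by omega) (by omega); omega
    have hcop : Nat.Coprime (a (p+1)) (n (p+1)) := by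
      rw [hn (p+1) le_rfl, show Finset.Icc (p+1+1) (p+1) = ∅ by
        rw [Finset.Icc_eq_empty_iff]; omega, Finset.prod_empty, mul_one]
      apply Nat.Coprime.prod_right
      intro i hi
      simp only [mem_Icc] at hi
      exact hab (p+1) i hi.1 hi.2 le_rfl
    have hdvd : ∀ j, j ≤ p → a (p+1) ∣ n j := by
      intro j hj
      rw [hn j (by omega)]
      exact Dvd.dvd.mul_left
        (Finset.dvd_prod_of_mem a (by simp only [mem_Icc]; omega)) _
    rw [Finset.sum_range_succ (fun j => y j * n j) (p+1),
        Finset.sum_range_succ (fun j => z j * n j) (p+1)] at hsum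
    have hT1 : a (p+1) ∣ ∑ i ∈ Finset.range (p+1), y i * n i :=
      Finset.dvd_sum fun i hi => Dvd.dvd.mul_left (hdvd i (by simp at hi; omega)) _
    have hT2 : a (p+1) ∣ ∑ i ∈ Finset.range (p+1), z i * n i :=
      Finset.dvd_sum fun i hi => Dvd.dvd.mul_left (hdvd i (by simp at hi; omega)) _
    obtain ⟨t1, ht1⟩ := hT1
    obtain ⟨t2, ht2⟩ := hT2
    rw [ht1, ht2] at hsum
    have hmod : y (p+1) ≡ z (p+1) [MOD a (p+1)] := by
      apply Nat.ModEq.cancel_right_of_coprime (c := n (p+1)) hcop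
      show (y (p+1) * n (p+1)) % a (p+1) = (z (p+1) * n (p+1)) % a (p+1)
      have heq : y (p+1) * n (p+1) + a (p+1) * t1 = z (p+1) * n (p+1) + a (p+1) * t2 := by
        omega
      calc (y (p+1) * n (p+1)) % a (p+1)
          = (y (p+1) * n (p+1) + a (p+1) * t1) % a (p+1) :=
            (Nat.add_mul_mod_self_left _ _ _).symm
        _ = (z (p+1) * n (p+1) + a (p+1) * t2) % a (p+1) := by rw [heq]
        _ = (z (p+1) * n (p+1)) % a (p+1) := Nat.add_mul_mod_self_left _ _ _
    have hpp : y (p+1) = z (p+1) := by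
      have h1 := hy (p+1) (by omega) (by omega)
      have h2 := hz (p+1) (by omega) (by omega)
      have := hmod
      unfold Nat.ModEq at this
      rwa [Nat.mod_eq_of_lt h1, Nat.mod_eq_of_lt h2] at this
    have htail : ∑ i ∈ Finset.range (p+1), y i * n i = ∑ i ∈ Finset.range (p+1), z i * n i := by
      rw [ht1, ht2]; rw [hpp] at hsum; omega
    set n' : ℕ → ℕ := fun i => (∏ j ∈ Finset.Icc 1 i, b j) * ∏ j ∈ Finset.Icc (i+1) p, a j with hn'def
    have hrel : ∀ i, i ≤ p → n i = a (p+1) * n' i := by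
      intro i hi
      rw [hn i (by omega), hn'def]
      simp only
      rw [Finset.prod_Icc_succ_top (by omega) a]
      ring
    have htail' : ∑ i ∈ Finset.range (p+1), y i * n' i
        = ∑ i ∈ Finset.range (p+1), z i * n' i := by
      have e1 : ∀ w : ℕ → ℕ, ∑ i ∈ Finset.range (p+1), w i * n i
          = a (p+1) * ∑ i ∈ Finset.range (p+1), w i * n' i := by
        intro w
        rw [Finset.mul_sum]
        apply Finset.sum_congr rfl
        intro i hi
        simp only [Finset.mem_range] at hi
        rw [hrel i (by omega)]; ring
      have := htail
      rw [e1 y, e1 z] at this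
      exact Nat.eq_of_mul_eq_mul_left hap this
    have hIH := IH a b n'
      (fun i h1 h2 => ha i h1 (by omega))
      (fun i j h1 h2 h3 => hab i j h1 h2 (by omega))
      (fun i hi => rfl)
      y z
      (fun j h1 h2 => hy j h1 (by omega))
      (fun j h1 h2 => hz j h1 (by omega))
      htail'
    intro j hj
    rcases Nat.lt_or_ge j (p+1) with h | h
    · exact hIH j (by omega)
    · have : j = p+1 := by omega
      rw [this]; exact hpp

private lemma min_len (p : ℕ) (a b n : ℕ → ℕ)
    (ha : ∀ i, 1 ≤ i → i ≤ p → 2 ≤ a i ∧ a i < b i)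
    (hab : ∀ i j, 1 ≤ j → j ≤ i → i ≤ p → Nat.gcd (a i) (b j) = 1)
    (hn : ∀ i, i ≤ p → n i = (∏ j ∈ Finset.Icc 1 i, b j) * ∏ j ∈ Finset.Icc (i+1) p, a j)
    (xp : ℕ → ℕ) (hxpb : ∀ j, j < p → xp j < b (j+1)) :
    ∀ m (y : ℕ → ℕ), ∑ j ∈ Finset.range (p+1), y j = m →
      ∑ j ∈ Finset.range (p+1), y j * n j = ∑ j ∈ Finset.range (p+1), xp j * n j →
      ∑ j ∈ Finset.range (p+1), xp j ≤ m := by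
  intro m
  induction m using Nat.strong_induction_on with
  | _ m IH =>
    intro y hm hsum
    by_cases hnorm : ∀ j, j < p → y j < b (j+1)
    · have heq := unique_pn p a b n ha hab hn y xp hnorm hxpb hsum
      subst hm
      exact le_of_eq (Finset.sum_congr rfl fun j hj =>
        (heq j (by simp only [Finset.mem_range] at hj; omega)).symm)
    · push_neg at hnorm
      obtain ⟨j, hj, hbj⟩ := hnorm
      set y' : ℕ → ℕ := fun i =>
        if i = j then y j - b (j+1) else if i = j+1 then y (j+1) + a (j+1) else y i
        with hy'def
      have hjm : j ∈ Finset.range (p+1) := by simp only [Finset.mem_range]; omega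
      have hj1m : j+1 ∈ Finset.range (p+1) := by simp only [Finset.mem_range]; omega
      have hne : j ≠ j+1 := by omega
      have key : n j * b (j+1) = n (j+1) * a (j+1) := key_id p a b n hn j hj
      have hy'j : y' j = y j - b (j+1) := by simp [hy'def]
      have hy'j1 : y' (j+1) = y (j+1) + a (j+1) := by simp [hy'def]
      have hy'o : ∀ i ∈ Finset.range (p+1) \ {j, j+1}, y' i = y i := by
        intro i hi
        simp only [Finset.mem_sdiff, Finset.mem_insert, Finset.mem_singleton,
          not_or] at hi
        simp only [hy'def, if_neg hi.2.1, if_neg hi.2.2]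
      have hs1 : ∑ i ∈ Finset.range (p+1), y' i * n i
          = ∑ i ∈ Finset.range (p+1), y i * n i := by
        rw [sum_two_split _ (fun i => y' i * n i) j (j+1) hjm hj1m hne,
            sum_two_split _ (fun i => y i * n i) j (j+1) hjm hj1m hne]
        rw [Finset.sum_congr rfl (fun i hi => by rw [hy'o i hi] :
              ∀ i ∈ Finset.range (p+1) \ {j, j+1}, y' i * n i = y i * n i),
            hy'j, hy'j1, Nat.sub_mul, Nat.add_mul]
        have hmul : b (j+1) * n j ≤ y j * n j := Nat.mul_le_mul_right _ hbj
        have key' : b (j+1) * n j = a (j+1) * n (j+1) := by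
          rw [mul_comm, key, mul_comm]
        omega
      have hs2 : ∑ i ∈ Finset.range (p+1), y' i < m := by
        subst hm
        have hcong : ∑ i ∈ Finset.range (p+1) \ {j, j+1}, y' i
            = ∑ i ∈ Finset.range (p+1) \ {j, j+1}, y i :=
          Finset.sum_congr rfl hy'o
        rw [sum_two_split _ y' j (j+1) hjm hj1m hne,
            sum_two_split _ y j (j+1) hjm hj1m hne,
            hcong, hy'j, hy'j1]
        have hab' := ha (j+1) (by omega) (by omega)
        omega
      exact (IH (∑ i ∈ Finset.range (p+1), y' i) hs2 y' rfl (hs1.trans hsum)).trans hs2.le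

private lemma max_len (p : ℕ) (a b n : ℕ → ℕ)
    (ha : ∀ i, 1 ≤ i → i ≤ p → 2 ≤ a i ∧ a i < b i)
    (hab : ∀ i j, 1 ≤ j → j ≤ i → i ≤ p → Nat.gcd (a i) (b j) = 1)
    (hn : ∀ i, i ≤ p → n i = (∏ j ∈ Finset.Icc 1 i, b j) * ∏ j ∈ Finset.Icc (i+1) p, a j)
    (x0 : ℕ → ℕ) (hx0a : ∀ j, 1 ≤ j → j ≤ p → x0 j < a j)
    (N : ℕ) (hx0 : ∑ j ∈ Finset.range (p+1), x0 j * n j = N) :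
    ∀ k (y : ℕ → ℕ), ∑ j ∈ Finset.range (p+1), y j * n j = N →
      N - ∑ j ∈ Finset.range (p+1), y j = k →
      ∑ j ∈ Finset.range (p+1), y j ≤ ∑ j ∈ Finset.range (p+1), x0 j := by
  intro k
  induction k using Nat.strong_induction_on with
  | _ k IH =>
    intro y hsum hk
    by_cases hnorm : ∀ j, 1 ≤ j → j ≤ p → y j < a j
    · have heq := unique_0n p a b n ha hab hn y x0 hnorm hx0a
        (hsum.trans hx0.symm)
      exact le_of_eq (Finset.sum_congr rfl fun j hj =>
        heq j (by simp only [Finset.mem_range] at hj; omega))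
    · push_neg at hnorm
      obtain ⟨j, h1j, hjp, haj⟩ := hnorm
      obtain ⟨jj, rfl⟩ : ∃ jj, j = jj + 1 := ⟨j - 1, by omega⟩
      have hjlt : jj < p := by omega
      set y' : ℕ → ℕ := fun i =>
        if i = jj then y jj + b (jj+1) else if i = jj+1 then y (jj+1) - a (jj+1) else y i
        with hy'def
      have hjm : jj ∈ Finset.range (p+1) := by simp only [Finset.mem_range]; omega
      have hj1m : jj+1 ∈ Finset.range (p+1) := by simp only [Finset.mem_range]; omega
      have hne : jj ≠ jj+1 := by omega
      have key : n jj * b (jj+1) = n (jj+1) * a (jj+1) := key_id p a b n hn jj hjlt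
      have hy'j : y' jj = y jj + b (jj+1) := by simp [hy'def]
      have hy'j1 : y' (jj+1) = y (jj+1) - a (jj+1) := by simp [hy'def]
      have hy'o : ∀ i ∈ Finset.range (p+1) \ {jj, jj+1}, y' i = y i := by
        intro i hi
        simp only [Finset.mem_sdiff, Finset.mem_insert, Finset.mem_singleton,
          not_or] at hi
        simp only [hy'def, if_neg hi.2.1, if_neg hi.2.2]
      have hs1 : ∑ i ∈ Finset.range (p+1), y' i * n i
          = ∑ i ∈ Finset.range (p+1), y i * n i := by
        rw [sum_two_split _ (fun i => y' i * n i) jj (jj+1) hjm hj1m hne,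
            sum_two_split _ (fun i => y i * n i) jj (jj+1) hjm hj1m hne]
        rw [Finset.sum_congr rfl (fun i hi => by rw [hy'o i hi] :
              ∀ i ∈ Finset.range (p+1) \ {jj, jj+1}, y' i * n i = y i * n i),
            hy'j, hy'j1, Nat.add_mul, Nat.sub_mul]
        have hmul : a (jj+1) * n (jj+1) ≤ y (jj+1) * n (jj+1) :=
          Nat.mul_le_mul_right _ haj
        have key' : b (jj+1) * n jj = a (jj+1) * n (jj+1) := by
          rw [mul_comm, key, mul_comm]
        omega
      have hlen : ∑ i ∈ Finset.range (p+1), y i < ∑ i ∈ Finset.range (p+1), y' i := by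
        have hcong : ∑ i ∈ Finset.range (p+1) \ {jj, jj+1}, y' i
            = ∑ i ∈ Finset.range (p+1) \ {jj, jj+1}, y i :=
          Finset.sum_congr rfl hy'o
        rw [sum_two_split _ y' jj (jj+1) hjm hj1m hne,
            sum_two_split _ y jj (jj+1) hjm hj1m hne,
            hcong, hy'j, hy'j1]
        have hab' := ha (jj+1) (by omega) (by omega)
        omega
      have hbound : ∑ i ∈ Finset.range (p+1), y' i ≤ N := by
        calc ∑ i ∈ Finset.range (p+1), y' i
            ≤ ∑ i ∈ Finset.range (p+1), y' i * n i := by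
              apply Finset.sum_le_sum
              intro i hi
              simp only [Finset.mem_range] at hi
              exact Nat.le_mul_of_pos_right _ (n_pos p a b n ha hn i (by omega))
          _ = N := hs1.trans hsum
      refine IH (N - ∑ i ∈ Finset.range (p+1), y' i) (by omega) y'
        (hs1.trans hsum) rfl |>.trans' ?_
      omega

theorem stmt15 (p : ℕ) (hp : 1 ≤ p) (a b : ℕ → ℕ)
    (ha : ∀ i, 1 ≤ i → i ≤ p → 2 ≤ a i ∧ a i < b i)
    (hab : ∀ i j, 1 ≤ j → j ≤ i → i ≤ p → Nat.gcd (a i) (b j) = 1)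
    (n : ℕ → ℕ)
    (hn : ∀ i, i ≤ p → n i = (∏ j ∈ Finset.Icc 1 i, b j) * ∏ j ∈ Finset.Icc (i+1) p, a j)
    (N : ℕ)
    (x0 : ℕ → ℕ) (hx0s : ∀ j, p < j → x0 j = 0)
    (hx0 : ∑ j ∈ Finset.range (p+1), x0 j * n j = N)
    (hx0a : ∀ j, 0 < j → j ≤ p → x0 j < a j)
    (xp : ℕ → ℕ) (hxps : ∀ j, p < j → xp j = 0)
    (hxp : ∑ j ∈ Finset.range (p+1), xp j * n j = N)
    (hxpb : ∀ j, j < p → xp j < b (j+1))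
    (y : ℕ → ℕ) (hys : ∀ j, p < j → y j = 0)
    (hy : ∑ j ∈ Finset.range (p+1), y j * n j = N) :
    ∑ j ∈ Finset.range (p+1), xp j ≤ ∑ j ∈ Finset.range (p+1), y j ∧
    ∑ j ∈ Finset.range (p+1), y j ≤ ∑ j ∈ Finset.range (p+1), x0 j := by
  constructor
  · exact min_len p a b n ha hab hn xp hxpb (∑ j ∈ Finset.range (p+1), y j) y rfl
      (hy.trans hxp.symm)
  · exact max_len p a b n ha hab hn x0 (fun j h1 h2 => hx0a j h1 h2) N hx0
      (N - ∑ j ∈ Finset.range (p+1), y j) y hy rfl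
end

section
/- Let S be a numerical semigroup on a compound sequence. Then the genus of S, i.e., |ℕ \ S|, equals (1 − n_0 + Σ_{j=1}^p n_j(a_j − 1))/2. -/
/-!
Every integer `m` can be written as `m = ∑_{j=1}^p x_j n_j + k n_0` with `0 ≤ x_j < a_j`, and the
box part is unique: the box sums are pairwise incongruent modulo `n_0 = a_1 ⋯ a_p` (peel off the
top coordinate modulo `a_p`, which is coprime to `n_p = b_1 ⋯ b_p`, and divide the rest by `a_p`).
Since `a_j n_j = b_j n_{j-1}`, any nonnegative combination of the generators can be carried into a
box with `k ≥ 0`, so `m ∈ S` iff `k ≥ 0`; the box sums form the Apéry set of `n_0`. Reflecting the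
box, `x_j ↦ a_j - 1 - x_j`, turns `k` into `-1 - k`, so `S` is symmetric with Frobenius number
`F = ∑ (a_j - 1) n_j - n_0`, and the gaps are exactly half of `{0, …, F}`.
-/

open Finset

lemma two_mul_ncard_compl_eq_of_symm (S : Set ℕ) (c : ℕ) (hge : ∀ m, c ≤ m → m ∈ S)
    (hsymm : ∀ m < c, m ∈ S ↔ c - 1 - m ∉ S) : 2 * Sᶜ.ncard = c := by
  classical
  have hcompl : Sᶜ = ↑((range c).filter (· ∉ S)) := by
    ext m
    simp only [Set.mem_compl_iff, coe_filter, mem_range, Set.mem_ofPred_eq]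
    exact ⟨fun hm => ⟨not_le.mp (mt (hge m) hm), hm⟩, And.right⟩
  have hcard : ((range c).filter (· ∉ S)).card = ((range c).filter (· ∈ S)).card := by
    refine card_nbij' (c - 1 - ·) (c - 1 - ·) ?_ ?_ ?_ ?_ <;>
      simp only [coe_filter, mem_range, Set.mem_ofPred_eq, Set.MapsTo, Set.LeftInvOn]
    · intro m ⟨hm, hmS⟩
      exact ⟨by omega, by_contra fun h => hmS ((hsymm m hm).mpr h)⟩
    · intro m ⟨hm, hmS⟩
      exact ⟨by omega, (hsymm m hm).mp hmS⟩
    all_goals intro m ⟨hm, _⟩; omega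
  rw [hcompl, Set.ncard_coe_finset, two_mul]
  nth_rw 2 [hcard]
  rw [add_comm, card_filter_add_card_filter_not, card_range]

lemma Int.exists_lt_dvd_sub_mul {A B : ℕ} (hA : 0 < A) (hAB : A.Coprime B) (m : ℤ) :
    ∃ t < A, (A : ℤ) ∣ m - t * B := by
  have : NeZero A := ⟨hA.ne'⟩
  set u := ZMod.unitOfCoprime B hAB.symm
  refine ⟨((m : ZMod A) * ↑u⁻¹).val, ZMod.val_lt _, ?_⟩
  rw [← ZMod.intCast_zmod_eq_zero_iff_dvd]
  push_cast
  rw [ZMod.natCast_zmod_val, ← ZMod.coe_unitOfCoprime B hAB.symm, mul_assoc, Units.inv_mul,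
    mul_one, sub_self]

lemma Finset.sum_range_succ_eq_add_sum_Icc {M : Type*} [AddCommMonoid M] (f : ℕ → M) (p : ℕ) :
    ∑ j ∈ range (p + 1), f j = f 0 + ∑ j ∈ Icc 1 p, f j := by
  rw [Nat.range_succ_eq_Icc_zero, ← add_sum_Ioc_eq_sum_Icc (Nat.zero_le p),
    ← Icc_add_one_left_eq_Ioc, zero_add]

namespace CompoundSequence

variable (a b : ℕ → ℕ)

def n (p i : ℕ) : ℕ := (∏ j ∈ Icc 1 i, b j) * ∏ j ∈ Icc (i + 1) p, a j

def boxSum (p : ℕ) (x : ℕ → ℕ) : ℕ := ∑ j ∈ Icc 1 p, x j * n a b p j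

def InBox (p : ℕ) (x : ℕ → ℕ) : Prop := ∀ j, 1 ≤ j → j ≤ p → x j < a j

def semigroup (p : ℕ) : Set ℕ := {m | ∃ y : ℕ → ℕ, ∑ j ∈ range (p + 1), y j * n a b p j = m}

-- the Frobenius number plus one
def conductor (p : ℕ) : ℕ := boxSum a b p (fun j => a j - 1) + 1 - n a b p 0

lemma n_zero (p : ℕ) : n a b p 0 = ∏ j ∈ Icc 1 p, a j := by
  simp [n]

lemma n_zero_zero : n a b 0 0 = 1 := by
  simp [n]

lemma n_succ_of_le {p i : ℕ} (h : i ≤ p) : n a b (p + 1) i = n a b p i * a (p + 1) := by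
  rw [n, n, prod_Icc_succ_top (by omega), mul_assoc]

lemma n_self (p : ℕ) : n a b p p = ∏ j ∈ Icc 1 p, b j := by
  simp [n]

lemma a_mul_n_succ_self (p : ℕ) :
    a (p + 1) * n a b (p + 1) (p + 1) = b (p + 1) * n a b (p + 1) p := by
  rw [n_succ_of_le a b le_rfl, n_self, n_self, prod_Icc_succ_top (by omega)]
  ring

lemma sum_mul_n_succ (p : ℕ) (s : Finset ℕ) (hs : ∀ j ∈ s, j ≤ p) (y : ℕ → ℕ) :
    ∑ j ∈ s, y j * n a b (p + 1) j = (∑ j ∈ s, y j * n a b p j) * a (p + 1) := by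
  rw [sum_mul]
  refine sum_congr rfl fun j hj => ?_
  rw [n_succ_of_le a b (hs j hj), mul_assoc]

lemma boxSum_update_succ (p : ℕ) (x : ℕ → ℕ) (t : ℕ) :
    boxSum a b (p + 1) (Function.update x (p + 1) t)
      = boxSum a b p x * a (p + 1) + t * n a b (p + 1) (p + 1) := by
  rw [boxSum, sum_Icc_succ_top (by omega), Function.update_self, boxSum,
    ← sum_mul_n_succ a b p _ (fun j hj => (mem_Icc.mp hj).2)]
  congr 1
  refine sum_congr rfl fun j hj => ?_
  rw [Function.update_of_ne (by simp at hj; omega)]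

lemma boxSum_succ (p : ℕ) (x : ℕ → ℕ) :
    boxSum a b (p + 1) x = boxSum a b p x * a (p + 1) + x (p + 1) * n a b (p + 1) (p + 1) := by
  simpa using boxSum_update_succ a b p x (x (p + 1))

variable {a b}

lemma InBox.mono {p q : ℕ} {x : ℕ → ℕ} (hx : InBox a q x) (h : p ≤ q) : InBox a p x :=
  fun j h1 h2 => hx j h1 (h2.trans h)

lemma InBox.update_succ {p : ℕ} {x : ℕ → ℕ} (hx : InBox a p x) {t : ℕ} (ht : t < a (p + 1)) :
    InBox a (p + 1) (Function.update x (p + 1) t) := by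
  intro j h1 h2
  rcases eq_or_ne j (p + 1) with rfl | hj
  · simpa using ht
  · rw [Function.update_of_ne hj]
    exact hx j h1 (by omega)

lemma n_zero_pos {p : ℕ} (hpos : ∀ i, 1 ≤ i → i ≤ p → 0 < a i) : 0 < n a b p 0 := by
  rw [n_zero]
  exact prod_pos fun i hi => hpos i (mem_Icc.mp hi).1 (mem_Icc.mp hi).2

lemma coprime_n_self {p : ℕ} (hcop : ∀ j, 1 ≤ j → j ≤ p → (a p).Coprime (b j)) :
    (a p).Coprime (n a b p p) := by
  rw [n_self]
  exact Nat.Coprime.prod_right fun j hj => hcop j (mem_Icc.mp hj).1 (mem_Icc.mp hj).2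

lemma exists_inBox_eq_boxSum_add_mul {p : ℕ} (hpos : ∀ i, 1 ≤ i → i ≤ p → 0 < a i)
    (hcop : ∀ i j, 1 ≤ j → j ≤ i → i ≤ p → (a i).Coprime (b j)) (m : ℤ) :
    ∃ x, InBox a p x ∧ ∃ k : ℤ, m = boxSum a b p x + k * n a b p 0 := by
  induction p generalizing m with
  | zero => exact ⟨0, fun j h1 h2 => by omega, m, by simp [boxSum, n_zero_zero]⟩
  | succ p ih =>
    obtain ⟨t, ht, m', hm'⟩ := Int.exists_lt_dvd_sub_mul (hpos (p + 1) (by omega) le_rfl)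
      (coprime_n_self fun j h1 h2 => hcop (p + 1) j h1 h2 le_rfl) m
    obtain ⟨x, hx, k, hk⟩ := ih (fun i h1 h2 => hpos i h1 (by omega))
      (fun i j h1 h2 h3 => hcop i j h1 h2 (by omega)) m'
    refine ⟨Function.update x (p + 1) t, hx.update_succ ht, k, ?_⟩
    rw [boxSum_update_succ, n_succ_of_le a b (Nat.zero_le p)]
    push_cast
    linear_combination hm' + (a (p + 1) : ℤ) * hk

lemma boxSum_eq_of_modEq {p : ℕ} (hpos : ∀ i, 1 ≤ i → i ≤ p → 0 < a i)
    (hcop : ∀ i j, 1 ≤ j → j ≤ i → i ≤ p → (a i).Coprime (b j)) {x y : ℕ → ℕ}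
    (hx : InBox a p x) (hy : InBox a p y)
    (h : boxSum a b p x ≡ boxSum a b p y [MOD n a b p 0]) : boxSum a b p x = boxSum a b p y := by
  induction p with
  | zero => simp [boxSum]
  | succ p ih =>
    rw [boxSum_succ, boxSum_succ, n_succ_of_le a b (Nat.zero_le p)] at h
    rw [boxSum_succ, boxSum_succ]
    have htop : x (p + 1) = y (p + 1) := by
      have hA := Nat.ModEq.add_left_cancel (by simp [Nat.ModEq]) (h.of_mul_left _)
      exact (hA.cancel_right_of_coprime
        (coprime_n_self fun j h1 h2 => hcop (p + 1) j h1 h2 le_rfl)).eq_of_lt_of_lt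
        (hx _ (by omega) le_rfl) (hy _ (by omega) le_rfl)
    rw [htop] at h ⊢
    have hlow := (h.add_right_cancel' _).mul_right_cancel' (hpos (p + 1) (by omega) le_rfl).ne'
    rw [ih (fun i h1 h2 => hpos i h1 (by omega)) (fun i j h1 h2 h3 => hcop i j h1 h2 (by omega))
      (hx.mono (by omega)) (hy.mono (by omega)) hlow]

lemma exists_inBox_sum_eq_boxSum_add_mul {p : ℕ} (hpos : ∀ i, 1 ≤ i → i ≤ p → 0 < a i)
    (y : ℕ → ℕ) :
    ∃ x, InBox a p x ∧ ∃ k : ℕ,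
      ∑ j ∈ range (p + 1), y j * n a b p j = boxSum a b p x + k * n a b p 0 := by
  induction p generalizing y with
  | zero => exact ⟨0, fun j h1 h2 => by omega, y 0, by simp [boxSum, n_zero_zero]⟩
  | succ p ih =>
    have hA := hpos (p + 1) (by omega) le_rfl
    set q := y (p + 1) / a (p + 1)
    set r := y (p + 1) % a (p + 1)
    -- `q * a (p + 1)` copies of `n (p + 1) (p + 1)` are `q * b (p + 1)` copies of `n (p + 1) p`
    obtain ⟨x, hx, k, hk⟩ := ih (fun i h1 h2 => hpos i h1 (by omega))
      (fun j => y j + if j = p then q * b (p + 1) else 0)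
    refine ⟨Function.update x (p + 1) r, hx.update_succ (Nat.mod_lt _ hA), k, ?_⟩
    have hcarry : ∑ j ∈ range (p + 1), (y j + if j = p then q * b (p + 1) else 0) * n a b p j
        = ∑ j ∈ range (p + 1), y j * n a b p j + q * b (p + 1) * n a b p p := by
      simp [add_mul, sum_add_distrib, ite_mul]
    have hdiv : y (p + 1) = q * a (p + 1) + r := (Nat.div_add_mod' _ _).symm
    have hrel := a_mul_n_succ_self a b p
    rw [n_succ_of_le a b le_rfl] at hrel
    rw [sum_range_succ, sum_mul_n_succ a b p _ (fun j hj => Nat.lt_succ_iff.mp (mem_range.mp hj)),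
      boxSum_update_succ, n_succ_of_le a b (Nat.zero_le p)]
    linear_combination (n a b (p + 1) (p + 1)) * hdiv + q * hrel + a (p + 1) * (hcarry.symm.trans hk)

lemma mem_semigroup_iff {p : ℕ} (hpos : ∀ i, 1 ≤ i → i ≤ p → 0 < a i)
    (hcop : ∀ i j, 1 ≤ j → j ≤ i → i ≤ p → (a i).Coprime (b j)) {x : ℕ → ℕ} (hx : InBox a p x)
    {m : ℕ} {k : ℤ} (hm : (m : ℤ) = boxSum a b p x + k * n a b p 0) :
    m ∈ semigroup a b p ↔ 0 ≤ k := by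
  have hN0 : (0 : ℤ) < n a b p 0 := by exact_mod_cast n_zero_pos hpos
  constructor
  · rintro ⟨y, rfl⟩
    obtain ⟨x', hx', k', hk'⟩ := exists_inBox_sum_eq_boxSum_add_mul (b := b) hpos y
    rw [hk'] at hm
    push_cast at hm
    have hbox := boxSum_eq_of_modEq hpos hcop hx hx' <| Int.natCast_modEq_iff.mp <|
      Int.modEq_iff_dvd.mpr ⟨k - k', by linear_combination hm⟩
    rw [hbox] at hm
    have hkk' : k = k' := mul_right_cancel₀ hN0.ne' (by linarith)
    exact hkk' ▸ Nat.cast_nonneg k'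
  · intro hk
    refine ⟨fun j => if j = 0 then k.toNat else x j, ?_⟩
    rw [sum_range_succ_eq_add_sum_Icc]
    dsimp only
    rw [if_pos rfl]
    have hbox : ∑ j ∈ Icc 1 p, (if j = 0 then k.toNat else x j) * n a b p j = boxSum a b p x :=
      sum_congr rfl fun j hj => by rw [if_neg (by simp at hj; omega)]
    rw [hbox]
    zify
    rw [Int.toNat_of_nonneg hk, hm]
    ring

lemma InBox.compl {p : ℕ} {x : ℕ → ℕ} (hx : InBox a p x) :
    InBox a p (fun j => a j - 1 - x j) :=
  fun j h1 h2 => show a j - 1 - x j < a j by have := hx j h1 h2; omega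

lemma boxSum_compl_add_boxSum {p : ℕ} {x : ℕ → ℕ} (hx : InBox a p x) :
    boxSum a b p (fun j => a j - 1 - x j) + boxSum a b p x = boxSum a b p (fun j => a j - 1) := by
  simp only [boxSum, ← sum_add_distrib, ← add_mul]
  refine sum_congr rfl fun j hj => ?_
  have := hx j (mem_Icc.mp hj).1 (mem_Icc.mp hj).2
  congr 1
  omega

lemma boxSum_le_boxSum_pred {p : ℕ} {x : ℕ → ℕ} (hx : InBox a p x) :
    boxSum a b p x ≤ boxSum a b p (fun j => a j - 1) :=
  (boxSum_compl_add_boxSum hx).symm ▸ Nat.le_add_left _ _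

lemma n_zero_le_boxSum_pred_add_one {p : ℕ} (hpos : ∀ i, 1 ≤ i → i ≤ p → 0 < a i)
    (hcop : ∀ i j, 1 ≤ j → j ≤ i → i ≤ p → (a i).Coprime (b j)) :
    n a b p 0 ≤ boxSum a b p (fun j => a j - 1) + 1 := by
  have hN0 := n_zero_pos (b := b) hpos
  obtain ⟨x, hx, k, hk⟩ := exists_inBox_eq_boxSum_add_mul hpos hcop (n a b p 0 - 1 : ℤ)
  have hk0 : k ≤ 0 := by
    by_contra! h
    nlinarith
  have := boxSum_le_boxSum_pred (b := b) hx
  nlinarith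

lemma mem_semigroup_of_conductor_le {p : ℕ} (hpos : ∀ i, 1 ≤ i → i ≤ p → 0 < a i)
    (hcop : ∀ i j, 1 ≤ j → j ≤ i → i ≤ p → (a i).Coprime (b j)) {m : ℕ}
    (hm : conductor a b p ≤ m) : m ∈ semigroup a b p := by
  obtain ⟨x, hx, k, hk⟩ := exists_inBox_eq_boxSum_add_mul hpos hcop m
  rw [mem_semigroup_iff hpos hcop hx hk]
  have hbox := boxSum_le_boxSum_pred (b := b) hx
  have hle := n_zero_le_boxSum_pred_add_one hpos hcop
  have hm' : boxSum a b p (fun j => a j - 1) + 1 ≤ m + n a b p 0 := by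
    unfold conductor at hm
    omega
  by_contra! hk0
  have : k * n a b p 0 ≤ -n a b p 0 := by nlinarith
  linarith

lemma mem_semigroup_iff_conductor_sub_notMem {p : ℕ} (hpos : ∀ i, 1 ≤ i → i ≤ p → 0 < a i)
    (hcop : ∀ i j, 1 ≤ j → j ≤ i → i ≤ p → (a i).Coprime (b j)) {m : ℕ}
    (hm : m < conductor a b p) :
    m ∈ semigroup a b p ↔ conductor a b p - 1 - m ∉ semigroup a b p := by
  obtain ⟨x, hx, k, hk⟩ := exists_inBox_eq_boxSum_add_mul hpos hcop m
  have hcompl := boxSum_compl_add_boxSum (b := b) hx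
  have hrefl : conductor a b p - 1 - m + m + n a b p 0 = boxSum a b p (fun j => a j - 1) := by
    unfold conductor at hm ⊢
    omega
  have hk' : ((conductor a b p - 1 - m : ℕ) : ℤ)
      = boxSum a b p (fun j => a j - 1 - x j) + (-1 - k) * n a b p 0 := by
    zify at hcompl hrefl
    linear_combination hrefl - hcompl - hk
  rw [mem_semigroup_iff hpos hcop hx hk, mem_semigroup_iff hpos hcop hx.compl hk']
  omega

end CompoundSequence

theorem stmt18_general (p : ℕ) (a b : ℕ → ℕ)
    (ha : ∀ i, 1 ≤ i → i ≤ p → 2 ≤ a i ∧ a i < b i)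
    (hab : ∀ i j, 1 ≤ j → j ≤ i → i ≤ p → Nat.gcd (a i) (b j) = 1)
    (n : ℕ → ℕ)
    (hn : ∀ i, i ≤ p → n i = (∏ j ∈ Finset.Icc 1 i, b j) * ∏ j ∈ Finset.Icc (i+1) p, a j) :
    2 * Set.ncard {m : ℕ | ¬∃ x : ℕ → ℕ, ∑ j ∈ Finset.range (p+1), x j * n j = m}
      + n 0 = 1 + ∑ j ∈ Finset.Icc 1 p, n j * (a j - 1) := by
  have hpos : ∀ i, 1 ≤ i → i ≤ p → 0 < a i := fun i h1 h2 => by have := (ha i h1 h2).1; omega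
  have hsum (x : ℕ → ℕ) :
      ∑ j ∈ range (p + 1), x j * n j = ∑ j ∈ range (p + 1), x j * CompoundSequence.n a b p j :=
    sum_congr rfl fun j hj => by rw [hn j (Nat.lt_succ_iff.mp (mem_range.mp hj))]; rfl
  have hgaps : {m : ℕ | ¬∃ x : ℕ → ℕ, ∑ j ∈ range (p + 1), x j * n j = m}
      = (CompoundSequence.semigroup a b p)ᶜ := by
    simp only [hsum]
    rfl
  have hsub : ∑ j ∈ Icc 1 p, n j * (a j - 1) = CompoundSequence.boxSum a b p (fun j => a j - 1) :=
    sum_congr rfl fun j hj => by rw [hn j (mem_Icc.mp hj).2, mul_comm]; rfl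
  rw [hgaps, hsub, show n 0 = CompoundSequence.n a b p 0 from hn 0 (Nat.zero_le p),
    two_mul_ncard_compl_eq_of_symm _ _
      (fun _ => CompoundSequence.mem_semigroup_of_conductor_le hpos hab)
      (fun _ => CompoundSequence.mem_semigroup_iff_conductor_sub_notMem hpos hab)]
  have := CompoundSequence.n_zero_le_boxSum_pred_add_one hpos hab
  unfold CompoundSequence.conductor
  omega

theorem stmt18 (p : ℕ) (hp : 1 ≤ p) (a b : ℕ → ℕ)
    (ha : ∀ i, 1 ≤ i → i ≤ p → 2 ≤ a i ∧ a i < b i)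
    (hab : ∀ i j, 1 ≤ j → j ≤ i → i ≤ p → Nat.gcd (a i) (b j) = 1)
    (n : ℕ → ℕ)
    (hn : ∀ i, i ≤ p → n i = (∏ j ∈ Finset.Icc 1 i, b j) * ∏ j ∈ Finset.Icc (i+1) p, a j) :
    2 * Set.ncard {m : ℕ | ¬∃ x : ℕ → ℕ, ∑ j ∈ Finset.range (p+1), x j * n j = m}
      + n 0 = 1 + ∑ j ∈ Finset.Icc 1 p, n j * (a j - 1) :=
  stmt18_general p a b ha hab n hn
end
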